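/- arXiv:2506.03604 — 11 statements merged into one kernel-verified Lean document; each statement's English description precedes it below -/
import Mathlib

section
/- In Kiselman's semigroup K_n, for any subset X of {1,...,n}, the element e_X (the product of generators a_i for i in X, taken in strictly decreasing order of index) is an idempotent. -/
def kiselmanRel (n : ℕ) : FreeMonoid (Fin n) → FreeMonoid (Fin n) → Prop := fun w v =>
  (∃ i : Fin n, w = .of i * .of i ∧ v = .of i) ∨
  (∃ i j : Fin n, i < j ∧ w = .of i * .of j * .of i ∧ v = .of j * .of i) ∨
  (∃ i j : Fin n, i < j ∧ w = .of j * .of i * .of j ∧ v = .of j * .of i)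

abbrev Kiselman (n : ℕ) := PresentedMonoid (kiselmanRel n)

def kGen (n : ℕ) (i : Fin n) : Kiselman n := PresentedMonoid.of (kiselmanRel n) i

def eSet (n : ℕ) (X : Finset (Fin n)) : Kiselman n :=
  ((X.sort (· ≤ ·)).reverse.map (kGen n)).prod

namespace KHelp

variable {n : ℕ}

lemma rel_eq {w v : FreeMonoid (Fin n)} (h : kiselmanRel n w v) :
    PresentedMonoid.mk (kiselmanRel n) w = PresentedMonoid.mk (kiselmanRel n) v :=
  Quotient.sound (ConGen.Rel.of w v h)

lemma gen_sq (i : Fin n) : kGen n i * kGen n i = kGen n i :=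
  rel_eq (Or.inl ⟨i, rfl, rfl⟩)

lemma gen_iji {i j : Fin n} (h : i < j) :
    kGen n i * kGen n j * kGen n i = kGen n j * kGen n i :=
  rel_eq (Or.inr (Or.inl ⟨i, j, h, rfl, rfl⟩))

lemma gen_jij {i j : Fin n} (h : i < j) :
    kGen n j * kGen n i * kGen n j = kGen n j * kGen n i :=
  rel_eq (Or.inr (Or.inr ⟨i, j, h, rfl, rfl⟩))

/-- word product -/
def W (l : List (Fin n)) : Kiselman n := (l.map (kGen n)).prod

@[simp] lemma W_nil : W ([] : List (Fin n)) = 1 := rfl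

@[simp] lemma W_cons (a : Fin n) (l : List (Fin n)) : W (a :: l) = kGen n a * W l := by
  simp [W]

@[simp] lemma W_append (l l' : List (Fin n)) : W (l ++ l') = W l * W l' := by
  simp [W]

/-- Lemma P: if all letters of `p` are greater than `k`, then `a_k p a_k = p a_k`. -/
lemma lemP (k : Fin n) : ∀ p : List (Fin n), (∀ j ∈ p, k < j) →
    kGen n k * W p * kGen n k = W p * kGen n k := by
  intro p
  induction p using List.reverseRecOn with
  | nil => simpa using gen_sq k
  | append_singleton q j ih =>
    intro hp
    have hkj : k < j := hp j (by simp)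
    have hq : ∀ x ∈ q, k < x := fun x hx => hp x (by simp [hx])
    have h1 : kGen n j * kGen n k = kGen n k * kGen n j * kGen n k := (gen_iji hkj).symm
    calc kGen n k * W (q ++ [j]) * kGen n k
        = kGen n k * W q * (kGen n j * kGen n k) := by simp [W, mul_assoc]
      _ = kGen n k * W q * (kGen n k * kGen n j * kGen n k) := by rw [← h1]
      _ = (kGen n k * W q * kGen n k) * (kGen n j * kGen n k) := by
          simp only [mul_assoc]
      _ = (W q * kGen n k) * (kGen n j * kGen n k) := by rw [ih hq]
      _ = W q * (kGen n k * kGen n j * kGen n k) := by simp only [mul_assoc]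
      _ = W q * (kGen n j * kGen n k) := by rw [gen_iji hkj]
      _ = W (q ++ [j]) * kGen n k := by simp [W, mul_assoc]

/-- Lemma W: if `w` is strictly decreasing and every letter of `p` exceeds every letter
of `w`, then `w p w = p w`. -/
lemma lemW : ∀ w p : List (Fin n), w.Pairwise (· > ·) →
    (∀ a ∈ p, ∀ b ∈ w, b < a) → W w * W p * W w = W p * W w := by
  intro w
  induction w with
  | nil => intro p _ _; simp
  | cons k u ih =>
    intro p hw hpw
    have hu : u.Pairwise (· > ·) := hw.tail
    have hku : ∀ b ∈ u, b < k := fun b hb => (List.pairwise_cons.mp hw).1 b hb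
    have hpu : ∀ a ∈ p ++ [k], ∀ b ∈ u, b < a := by
      intro a ha b hb
      rcases List.mem_append.mp ha with h | h
      · exact hpw a h b (by simp [hb])
      · simp at h; subst h; exact hku b hb
    have hpk : ∀ j ∈ p, k < j := fun j hj => hpw j hj k (by simp)
    calc W (k :: u) * W p * W (k :: u)
        = kGen n k * (W u * W (p ++ [k]) * W u) := by
          simp [mul_assoc]
      _ = kGen n k * (W (p ++ [k]) * W u) := by rw [ih (p ++ [k]) hu hpu]
      _ = (kGen n k * W p * kGen n k) * W u := by simp [mul_assoc]
      _ = (W p * kGen n k) * W u := by rw [lemP k p hpk]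
      _ = W p * W (k :: u) := by simp [mul_assoc]

end KHelp

/-- In Kiselman's semigroup `K_n`, every `e_X` is an idempotent. -/
theorem eSet_isIdempotent (n : ℕ) (X : Finset (Fin n)) :
    IsIdempotentElem (eSet n X) := by
  have hsort : (X.sort (· ≤ ·)).Pairwise (· < ·) := X.sortedLT_sort.pairwise
  have hpw : ((X.sort (· ≤ ·)).reverse).Pairwise (· > ·) := by
    rw [List.pairwise_reverse]
    exact hsort
  have h := KHelp.lemW ((X.sort (· ≤ ·)).reverse) [] hpw (by simp)
  have he : eSet n X = KHelp.W ((X.sort (· ≤ ·)).reverse) := rfl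
  unfold IsIdempotentElem
  rw [he]
  simpa using h
end

section
/- In Kiselman's semigroup K_n, for subsets X, Y of {1,...,n}, if every element of X \ Y is greater than every element of Y \ X, then e_X e_Y = e_{X ∪ Y}. -/
lemma krel {n : ℕ} {a b : FreeMonoid (Fin n)} (h : kiselmanRel n a b) :
    PresentedMonoid.mk (kiselmanRel n) a = PresentedMonoid.mk (kiselmanRel n) b :=
  Quotient.sound (ConGen.Rel.of _ _ h)

lemma kIdem {n : ℕ} (i : Fin n) : kGen n i * kGen n i = kGen n i :=
  krel (Or.inl ⟨i, rfl, rfl⟩)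

lemma kRelA {n : ℕ} {i j : Fin n} (h : i < j) :
    kGen n i * kGen n j * kGen n i = kGen n j * kGen n i :=
  krel (Or.inr (Or.inl ⟨i, j, h, rfl, rfl⟩))

lemma kRelB {n : ℕ} {i j : Fin n} (h : i < j) :
    kGen n j * kGen n i * kGen n j = kGen n j * kGen n i :=
  krel (Or.inr (Or.inr ⟨i, j, h, rfl, rfl⟩))

lemma absorb_lt {n : ℕ} (j : Fin n) :
    ∀ l : List (Fin n), (∀ b ∈ l, b < j) →
      kGen n j * (l.map (kGen n)).prod * kGen n j = kGen n j * (l.map (kGen n)).prod := by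
  intro l
  induction l with
  | nil => intro _; simp [kIdem]
  | cons b u IH =>
    intro hl
    have hb : b < j := hl b (by simp)
    have hu : ∀ x ∈ u, x < j := fun x hx => hl x (by simp [hx])
    simp only [List.map_cons, List.prod_cons]
    set U := (u.map (kGen n)).prod with hU
    calc kGen n j * (kGen n b * U) * kGen n j
        = (kGen n j * kGen n b) * (U * kGen n j) := by simp [mul_assoc]
      _ = (kGen n j * kGen n b * kGen n j) * (U * kGen n j) := by rw [kRelB hb]
      _ = (kGen n j * kGen n b) * (kGen n j * U * kGen n j) := by simp [mul_assoc]
      _ = (kGen n j * kGen n b) * (kGen n j * U) := by rw [IH hu]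
      _ = (kGen n j * kGen n b * kGen n j) * U := by simp [mul_assoc]
      _ = (kGen n j * kGen n b) * U := by rw [kRelB hb]
      _ = kGen n j * (kGen n b * U) := by rw [mul_assoc]

lemma absorb_gt {n : ℕ} (i : Fin n) :
    ∀ l : List (Fin n), (∀ b ∈ l, i < b) →
      kGen n i * (l.map (kGen n)).prod * kGen n i = (l.map (kGen n)).prod * kGen n i := by
  intro l
  induction l using List.reverseRecOn with
  | nil => intro _; simp [kIdem]
  | append_singleton u b IH =>
    intro hl
    have hb : i < b := hl b (by simp)
    have hu : ∀ x ∈ u, i < x := fun x hx => hl x (by simp [hx])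
    simp only [List.map_append, List.prod_append, List.map_cons, List.prod_cons,
      List.map_nil, List.prod_nil, mul_one]
    set U := (u.map (kGen n)).prod with hU
    calc kGen n i * (U * kGen n b) * kGen n i
        = (kGen n i * U) * (kGen n b * kGen n i) := by simp [mul_assoc]
      _ = (kGen n i * U) * (kGen n i * kGen n b * kGen n i) := by rw [kRelA hb]
      _ = (kGen n i * U * kGen n i) * (kGen n b * kGen n i) := by simp [mul_assoc]
      _ = (U * kGen n i) * (kGen n b * kGen n i) := by rw [IH hu]
      _ = U * (kGen n i * kGen n b * kGen n i) := by simp [mul_assoc]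
      _ = U * (kGen n b * kGen n i) := by rw [kRelA hb]
      _ = U * kGen n b * kGen n i := by rw [mul_assoc]

lemma eSet_insert {n : ℕ} (Z : Finset (Fin n)) (y : Fin n)
    (h1 : ∀ z ∈ Z, y ≤ z) (h2 : y ∉ Z) :
    eSet n (insert y Z) = eSet n Z * kGen n y := by
  unfold eSet
  rw [show Finset.sort (insert y Z) (· ≤ ·) = y :: Finset.sort Z (· ≤ ·) from
    Finset.sort_insert _ h1 h2]
  simp

lemma eSet_erase {n : ℕ} {S : Finset (Fin n)} {m : Fin n} (hm : m ∈ S)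
    (hmin : ∀ x ∈ S, m ≤ x) :
    eSet n S = eSet n (S.erase m) * kGen n m := by
  conv_lhs => rw [← Finset.insert_erase hm]
  exact eSet_insert _ m (fun z hz => hmin z (Finset.mem_of_mem_erase hz))
    (Finset.notMem_erase m S)

lemma absorb_mem {n : ℕ} {Z : Finset (Fin n)} {y : Fin n} (hy : y ∈ Z) :
    eSet n Z * kGen n y = eSet n Z := by
  have hy' : y ∈ Z.sort (· ≤ ·) := (Finset.mem_sort _).2 hy
  obtain ⟨s, t, hst⟩ := List.append_of_mem hy'
  have hsorted := Z.sortedLT_sort.pairwise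
  rw [hst] at hsorted
  have hs : ∀ a ∈ s.reverse, a < y := by
    intro a ha
    exact (List.pairwise_append.1 hsorted).2.2 a (List.mem_reverse.1 ha) y (by simp)
  have key := absorb_lt y s.reverse hs
  unfold eSet
  rw [hst]
  simp only [List.reverse_append, List.reverse_cons, List.map_append, List.prod_append,
    List.map_cons, List.prod_cons, List.map_nil, List.prod_nil, mul_one, List.nil_append,
    List.cons_append]
  set T := (t.reverse.map (kGen n)).prod
  set S := (s.reverse.map (kGen n)).prod
  calc T * kGen n y * S * kGen n y
      = T * (kGen n y * S * kGen n y) := by simp [mul_assoc]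
    _ = T * (kGen n y * S) := by rw [key]
    _ = T * kGen n y * S := by rw [mul_assoc]

lemma absorb_list {n : ℕ} {X : Finset (Fin n)} :
    ∀ l : List (Fin n), (∀ a ∈ l, a ∈ X) →
      eSet n X * (l.map (kGen n)).prod = eSet n X := by
  intro l
  induction l with
  | nil => intro _; simp
  | cons b u IH =>
    intro hl
    simp only [List.map_cons, List.prod_cons]
    rw [← mul_assoc, absorb_mem (hl b (by simp)), IH (fun a ha => hl a (by simp [ha]))]

lemma eSet_mul_subset {n : ℕ} {X Y : Finset (Fin n)} (h : Y ⊆ X) :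
    eSet n X * eSet n Y = eSet n X :=
  absorb_list _ (fun a ha => h ((Finset.mem_sort _).1 (List.mem_reverse.1 ha)))

/-- If every element of `X \ Y` exceeds every element of `Y \ X`, then
`e_X e_Y = e_{X ∪ Y}` in `K_n`. -/
theorem eSet_mul_of_gt (n : ℕ) (X Y : Finset (Fin n))
    (h : ∀ x ∈ X \ Y, ∀ y ∈ Y \ X, y < x) :
    eSet n X * eSet n Y = eSet n (X ∪ Y) := by
  revert X
  induction Y using Finset.strongInduction with
  | _ Y IH =>
  intro X h
  rcases Y.eq_empty_or_nonempty with rfl | hYne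
  · simp [eSet]
  rcases X.eq_empty_or_nonempty with rfl | hXne
  · simp [eSet]
  have hne : (X ∪ Y).Nonempty := hXne.mono Finset.subset_union_left
  set m := (X ∪ Y).min' hne with hm
  have hmin : ∀ z ∈ X ∪ Y, m ≤ z := fun z hz => Finset.min'_le _ z hz
  have hminX : ∀ z ∈ X, m ≤ z := fun z hz => hmin z (Finset.mem_union_left _ hz)
  have hminY : ∀ z ∈ Y, m ≤ z := fun z hz => hmin z (Finset.mem_union_right _ hz)
  by_cases hmX : m ∈ X
  · by_cases hmY : m ∈ Y
    · -- m ∈ X ∩ Y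
      have hY'lt : ∀ z ∈ Y.erase m, m < z := fun z hz =>
        lt_of_le_of_ne (hminY z (Finset.mem_of_mem_erase hz))
          (Ne.symm (Finset.ne_of_mem_erase hz))
      have hsub : Y.erase m ⊂ Y := Finset.erase_ssubset hmY
      have hcond : ∀ x ∈ X.erase m \ Y.erase m, ∀ y ∈ Y.erase m \ X.erase m, y < x := by
        intro x hx y hy
        rw [Finset.mem_sdiff, Finset.mem_erase] at hx hy
        refine h x (Finset.mem_sdiff.2 ⟨hx.1.2, fun hxY => hx.2 ?_⟩)
          y (Finset.mem_sdiff.2 ⟨hy.1.2, fun hyX => hy.2 ?_⟩)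
        · exact Finset.mem_erase.2 ⟨hx.1.1, hxY⟩
        · exact Finset.mem_erase.2 ⟨hy.1.1, hyX⟩
      have habs : kGen n m * eSet n (Y.erase m) * kGen n m = eSet n (Y.erase m) * kGen n m :=
        absorb_gt m _ (fun b hb => hY'lt b ((Finset.mem_sort _).1 (List.mem_reverse.1 hb)))
      have hXY' : X.erase m ∪ Y.erase m = (X ∪ Y).erase m :=
        (Finset.erase_union_distrib X Y m).symm
      calc eSet n X * eSet n Y
          = (eSet n (X.erase m) * kGen n m) * (eSet n (Y.erase m) * kGen n m) := by
            rw [← eSet_erase hmX hminX, ← eSet_erase hmY hminY]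
        _ = eSet n (X.erase m) * (kGen n m * eSet n (Y.erase m) * kGen n m) := by
            simp [mul_assoc]
        _ = eSet n (X.erase m) * (eSet n (Y.erase m) * kGen n m) := by rw [habs]
        _ = (eSet n (X.erase m) * eSet n (Y.erase m)) * kGen n m := by rw [mul_assoc]
        _ = eSet n (X.erase m ∪ Y.erase m) * kGen n m := by rw [IH _ hsub _ hcond]
        _ = eSet n (X ∪ Y) := by
            rw [hXY', ← eSet_erase (Finset.min'_mem _ hne) hmin]
    · -- m ∈ X \ Y : then Y ⊆ X
      have hYX : Y ⊆ X := by
        intro z hz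
        by_contra hzX
        exact absurd (h m (Finset.mem_sdiff.2 ⟨hmX, hmY⟩) z (Finset.mem_sdiff.2 ⟨hz, hzX⟩))
          (not_lt.2 (hminY z hz))
      rw [eSet_mul_subset hYX, Finset.union_eq_left.2 hYX]
  · -- m ∈ Y \ X
    have hmY : m ∈ Y := (Finset.mem_union.1 (Finset.min'_mem _ hne)).resolve_left hmX
    have hsub : Y.erase m ⊂ Y := Finset.erase_ssubset hmY
    have hcond : ∀ x ∈ X \ Y.erase m, ∀ y ∈ Y.erase m \ X, y < x := by
      intro x hx y hy
      rw [Finset.mem_sdiff] at hx hy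
      refine h x (Finset.mem_sdiff.2 ⟨hx.1, fun hxY => ?_⟩)
        y (Finset.mem_sdiff.2 ⟨Finset.mem_of_mem_erase hy.1, hy.2⟩)
      have : x = m := by
        by_contra hxm
        exact hx.2 (Finset.mem_erase.2 ⟨hxm, hxY⟩)
      exact hmX (this ▸ hx.1)
    have hmnotin : m ∉ X ∪ Y.erase m := by
      simp only [Finset.mem_union, Finset.mem_erase, not_or]
      exact ⟨hmX, by simp⟩
    have hminU : ∀ z ∈ X ∪ Y.erase m, m ≤ z := by
      intro z hz
      rcases Finset.mem_union.1 hz with hz | hz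
      · exact hminX z hz
      · exact hminY z (Finset.mem_of_mem_erase hz)
    have hins : insert m (X ∪ Y.erase m) = X ∪ Y := by
      rw [← Finset.union_insert, Finset.insert_erase hmY]
    calc eSet n X * eSet n Y
        = eSet n X * (eSet n (Y.erase m) * kGen n m) := by rw [← eSet_erase hmY hminY]
      _ = (eSet n X * eSet n (Y.erase m)) * kGen n m := by rw [mul_assoc]
      _ = eSet n (X ∪ Y.erase m) * kGen n m := by rw [IH _ hsub _ hcond]
      _ = eSet n (insert m (X ∪ Y.erase m)) := (eSet_insert _ _ hminU hmnotin).symm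
      _ = eSet n (X ∪ Y) := by rw [hins]
end

section
/- In Kiselman's semigroup K_n, for subsets X, Y of {1,...,n}, the product e_X e_Y is an idempotent if and only if e_X e_Y = e_{X ∪ Y}. -/
namespace KisTmp
variable {n : ℕ}

lemma r1 (i : Fin n) : kGen n i * kGen n i = kGen n i := by
  have : PresentedMonoid.mk (kiselmanRel n) (.of i * .of i) = PresentedMonoid.mk (kiselmanRel n) (.of i) :=
    Quotient.sound (ConGen.Rel.of _ _ (Or.inl ⟨i, rfl, rfl⟩))
  simpa [kGen, PresentedMonoid.of, map_mul] using this

lemma r2 {i j : Fin n} (h : i < j) :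
    kGen n i * kGen n j * kGen n i = kGen n j * kGen n i := by
  have : PresentedMonoid.mk (kiselmanRel n) (.of i * .of j * .of i) = PresentedMonoid.mk (kiselmanRel n) (.of j * .of i) :=
    Quotient.sound (ConGen.Rel.of _ _ (Or.inr (Or.inl ⟨i, j, h, rfl, rfl⟩)))
  simpa [kGen, PresentedMonoid.of, map_mul] using this

lemma r3 {i j : Fin n} (h : i < j) :
    kGen n j * kGen n i * kGen n j = kGen n j * kGen n i := by
  have : PresentedMonoid.mk (kiselmanRel n) (.of j * .of i * .of j) = PresentedMonoid.mk (kiselmanRel n) (.of j * .of i) :=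
    Quotient.sound (ConGen.Rel.of _ _ (Or.inr (Or.inr ⟨i, j, h, rfl, rfl⟩)))
  simpa [kGen, PresentedMonoid.of, map_mul] using this

/-- generators with index above `i` -/
abbrev up (n : ℕ) (i : Fin n) : Set (Kiselman n) := {g | ∃ x : Fin n, i < x ∧ g = kGen n x}
/-- generators with index below `j` -/
abbrev dn (n : ℕ) (j : Fin n) : Set (Kiselman n) := {g | ∃ x : Fin n, x < j ∧ g = kGen n x}
/-- generators with index in `V` -/
abbrev gens (n : ℕ) (V : Finset (Fin n)) : Set (Kiselman n) := {g | ∃ x ∈ V, g = kGen n x}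

lemma claimA (i : Fin n) {w : Kiselman n} (hw : w ∈ Submonoid.closure (up n i)) :
    kGen n i * w * kGen n i = w * kGen n i := by
  induction hw using Submonoid.closure_induction with
  | mem g hg => obtain ⟨x, hx, rfl⟩ := hg; exact r2 hx
  | one => rw [mul_one, r1, one_mul]
  | mul a b ha hb pa pb =>
      calc kGen n i * (a * b) * kGen n i
          = kGen n i * a * (b * kGen n i) := by simp only [mul_assoc]
        _ = kGen n i * a * (kGen n i * b * kGen n i) := by rw [pb]
        _ = (kGen n i * a * kGen n i) * (b * kGen n i) := by simp only [mul_assoc]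
        _ = a * kGen n i * (b * kGen n i) := by rw [pa]
        _ = a * (kGen n i * b * kGen n i) := by simp only [mul_assoc]
        _ = a * (b * kGen n i) := by rw [pb]
        _ = a * b * kGen n i := by simp only [mul_assoc]

lemma claimB (j : Fin n) {w : Kiselman n} (hw : w ∈ Submonoid.closure (dn n j)) :
    kGen n j * w * kGen n j = kGen n j * w := by
  induction hw using Submonoid.closure_induction with
  | mem g hg => obtain ⟨x, hx, rfl⟩ := hg; exact r3 hx
  | one => rw [mul_one]; exact r1 j
  | mul a b ha hb pa pb =>
      calc kGen n j * (a * b) * kGen n j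
          = kGen n j * a * (b * kGen n j) := by simp only [mul_assoc]
        _ = (kGen n j * a * kGen n j) * (b * kGen n j) := by rw [pa]
        _ = kGen n j * a * (kGen n j * b * kGen n j) := by simp only [mul_assoc]
        _ = kGen n j * a * (kGen n j * b) := by rw [pb]
        _ = (kGen n j * a * kGen n j) * b := by simp only [mul_assoc]
        _ = kGen n j * a * b := by rw [pa]
        _ = kGen n j * (a * b) := by simp only [mul_assoc]

lemma eSet_mem_closure {S : Set (Kiselman n)} {X : Finset (Fin n)}
    (h : ∀ x ∈ X, kGen n x ∈ S) : eSet n X ∈ Submonoid.closure S := by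
  apply Submonoid.list_prod_mem
  intro g hg
  simp only [List.mem_map, List.mem_reverse, Finset.mem_sort] at hg
  obtain ⟨x, hx, rfl⟩ := hg
  exact Submonoid.subset_closure (h x hx)


lemma sort_min_peel {X : Finset (Fin n)} {m : Fin n} (hm : m ∈ X) (h : ∀ x ∈ X, m ≤ x) :
    X.sort (· ≤ ·) = m :: ((X.erase m).sort (· ≤ ·)) := by
  have h1 : ∀ b ∈ X.erase m, m ≤ b := fun b hb => h b (Finset.mem_of_mem_erase hb)
  have := Finset.sort_insert (r := (· ≤ ·)) h1 (Finset.notMem_erase m X)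
  rwa [Finset.insert_erase hm] at this

lemma sort_max_peel {X : Finset (Fin n)} {M : Fin n} (hM : M ∈ X) (h : ∀ x ∈ X, x ≤ M) :
    X.sort (· ≤ ·) = ((X.erase M).sort (· ≤ ·)) ++ [M] := by
  refine (fun hp hs => List.Perm.eq_of_pairwise' (Finset.pairwise_sort _ _) hs hp) ?_ ?_
  · have h2 : X.toList.Perm (M :: (X.erase M).toList) := by
      have := Finset.toList_insert (Finset.notMem_erase M X)
      rwa [Finset.insert_erase hM] at this
    exact (Finset.sort_perm_toList _ _).trans (h2.trans ((List.Perm.cons M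
      (Finset.sort_perm_toList _ _).symm).trans (List.perm_append_singleton _ _).symm))
  · refine List.pairwise_append.2 ⟨Finset.pairwise_sort _ _, List.pairwise_singleton _ M, ?_⟩
    intro a ha b hb
    rw [List.mem_singleton] at hb
    subst hb
    rw [Finset.mem_sort] at ha
    exact h a (Finset.mem_of_mem_erase ha)


lemma eSet_empty : eSet n (∅ : Finset (Fin n)) = 1 := by
  simp [eSet, Finset.sort_empty]

lemma eSet_min_peel {X : Finset (Fin n)} {m : Fin n} (hm : m ∈ X) (h : ∀ x ∈ X, m ≤ x) :
    eSet n X = eSet n (X.erase m) * kGen n m := by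
  unfold eSet
  rw [sort_min_peel hm h]
  simp [List.reverse_cons, List.map_append, List.prod_append]

lemma eSet_max_peel {X : Finset (Fin n)} {M : Fin n} (hM : M ∈ X) (h : ∀ x ∈ X, x ≤ M) :
    eSet n X = kGen n M * eSet n (X.erase M) := by
  unfold eSet
  rw [sort_max_peel hM h]
  simp [List.reverse_append, List.map_append, List.prod_append]

lemma eSet_insert_max {W : Finset (Fin n)} {M : Fin n} (h : ∀ x ∈ W, x < M) :
    kGen n M * eSet n W = eSet n (insert M W) := by
  have hMW : M ∉ W := fun hc => absurd (h M hc) (lt_irrefl M)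
  have := eSet_max_peel (n := n) (X := insert M W) (M := M) (Finset.mem_insert_self M W) ?_
  · rw [this, Finset.erase_insert hMW]
  · intro x hx
    rcases Finset.mem_insert.1 hx with rfl | hx
    · exact le_refl _
    · exact le_of_lt (h x hx)

lemma eSet_insert_min {W : Finset (Fin n)} {m : Fin n} (h : ∀ x ∈ W, m < x) :
    eSet n W * kGen n m = eSet n (insert m W) := by
  have hmW : m ∉ W := fun hc => absurd (h m hc) (lt_irrefl m)
  have := eSet_min_peel (n := n) (X := insert m W) (m := m) (Finset.mem_insert_self m W) ?_
  · rw [this, Finset.erase_insert hmW]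
  · intro x hx
    rcases Finset.mem_insert.1 hx with rfl | hx
    · exact le_refl _
    · exact le_of_lt (h x hx)

lemma absL (V : Finset (Fin n)) : ∀ i ∈ V, kGen n i * eSet n V = eSet n V := by
  induction V using Finset.strongInduction with
  | _ V ih =>
    intro i hi
    have hne : V.Nonempty := ⟨i, hi⟩
    set M := V.max' hne with hMdef
    have hM : M ∈ V := V.max'_mem hne
    have hle : ∀ x ∈ V, x ≤ M := fun x hx => V.le_max' x hx
    rw [eSet_max_peel hM hle]
    by_cases hiM : i = M
    · subst hiM; rw [← mul_assoc, r1]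
    · have hilt : i < M := lt_of_le_of_ne (hle i hi) hiM
      have hi' : i ∈ V.erase M := Finset.mem_erase.2 ⟨fun hc => hiM (by rw [hc]), hi⟩
      have hIH := ih (V.erase M) (Finset.erase_ssubset hM) i hi'
      calc kGen n i * (kGen n M * eSet n (V.erase M))
          = kGen n i * (kGen n M * (kGen n i * eSet n (V.erase M))) := by rw [hIH]
        _ = (kGen n i * kGen n M * kGen n i) * eSet n (V.erase M) := by simp only [mul_assoc]
        _ = (kGen n M * kGen n i) * eSet n (V.erase M) := by rw [r2 hilt]
        _ = kGen n M * (kGen n i * eSet n (V.erase M)) := by simp only [mul_assoc]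
        _ = kGen n M * eSet n (V.erase M) := by rw [hIH]

lemma absR (V : Finset (Fin n)) : ∀ i ∈ V, eSet n V * kGen n i = eSet n V := by
  induction V using Finset.strongInduction with
  | _ V ih =>
    intro i hi
    have hne : V.Nonempty := ⟨i, hi⟩
    set m := V.min' hne with hmdef
    have hm : m ∈ V := V.min'_mem hne
    have hle : ∀ x ∈ V, m ≤ x := fun x hx => V.min'_le x hx
    rw [eSet_min_peel hm hle]
    by_cases him : i = m
    · subst him; rw [mul_assoc, r1]
    · have hilt : m < i := lt_of_le_of_ne (hle i hi) (Ne.symm him)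
      have hi' : i ∈ V.erase m := Finset.mem_erase.2 ⟨him, hi⟩
      have hIH := ih (V.erase m) (Finset.erase_ssubset hm) i hi'
      calc eSet n (V.erase m) * kGen n m * kGen n i
          = (eSet n (V.erase m) * kGen n i) * kGen n m * kGen n i := by rw [hIH]
        _ = eSet n (V.erase m) * (kGen n i * kGen n m * kGen n i) := by simp only [mul_assoc]
        _ = eSet n (V.erase m) * (kGen n i * kGen n m) := by
              rw [show kGen n i * kGen n m * kGen n i = kGen n i * kGen n m from r3 hilt]
        _ = (eSet n (V.erase m) * kGen n i) * kGen n m := by simp only [mul_assoc]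
        _ = eSet n (V.erase m) * kGen n m := by rw [hIH]

lemma absLP {V : Finset (Fin n)} {w : Kiselman n}
    (hw : w ∈ Submonoid.closure (gens n V)) : w * eSet n V = eSet n V := by
  induction hw using Submonoid.closure_induction with
  | mem g hg => obtain ⟨x, hx, rfl⟩ := hg; exact absL V x hx
  | one => rw [one_mul]
  | mul a b ha hb pa pb => rw [mul_assoc, pb, pa]

lemma absRP {V : Finset (Fin n)} {w : Kiselman n}
    (hw : w ∈ Submonoid.closure (gens n V)) : eSet n V * w = eSet n V := by
  induction hw using Submonoid.closure_induction with
  | mem g hg => obtain ⟨x, hx, rfl⟩ := hg; exact absR V x hx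
  | one => rw [mul_one]
  | mul a b ha hb pa pb => rw [← mul_assoc, pa, pb]

lemma mem_up_eSet {i : Fin n} {X : Finset (Fin n)} (h : ∀ x ∈ X, i < x) :
    eSet n X ∈ Submonoid.closure (up n i) :=
  eSet_mem_closure fun x hx => ⟨x, h x hx, rfl⟩

lemma mem_dn_eSet {j : Fin n} {X : Finset (Fin n)} (h : ∀ x ∈ X, x < j) :
    eSet n X ∈ Submonoid.closure (dn n j) :=
  eSet_mem_closure fun x hx => ⟨x, h x hx, rfl⟩

lemma mem_gens_eSet {V X : Finset (Fin n)} (h : X ⊆ V) :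
    eSet n X ∈ Submonoid.closure (gens n V) := by
  exact eSet_mem_closure fun x hx => show kGen n x ∈ gens n V from ⟨x, h hx, rfl⟩

lemma key : ∀ (N : ℕ) (X Y : Finset (Fin n)), (X ∪ Y).card ≤ N →
    ∃ k : ℕ, (eSet n X * eSet n Y) ^ (k + 1) = eSet n (X ∪ Y) := by
  intro N
  induction N with
  | zero =>
    intro X Y h
    have hU : X ∪ Y = ∅ := Finset.card_eq_zero.1 (Nat.le_zero.1 h)
    obtain ⟨hX, hY⟩ := Finset.union_eq_empty.1 hU
    exact ⟨0, by subst hX; subst hY; simp [eSet_empty]⟩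
  | succ N ih =>
    intro X Y hcard
    rcases (X ∪ Y).eq_empty_or_nonempty with hU | hne
    · obtain ⟨hX, hY⟩ := Finset.union_eq_empty.1 hU
      exact ⟨0, by subst hX; subst hY; simp [eSet_empty]⟩
    obtain ⟨m, hmZ, hmle⟩ : ∃ m ∈ X ∪ Y, ∀ x ∈ X ∪ Y, m ≤ x :=
      ⟨(X ∪ Y).min' hne, Finset.min'_mem _ _, fun x hx => Finset.min'_le _ x hx⟩
    obtain ⟨M, hMZ, hleM⟩ : ∃ M ∈ X ∪ Y, ∀ x ∈ X ∪ Y, x ≤ M :=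
      ⟨(X ∪ Y).max' hne, Finset.max'_mem _ _, fun x hx => Finset.le_max' _ x hx⟩
    have hcard_erase : ∀ a ∈ X ∪ Y, ((X ∪ Y).erase a).card ≤ N := by
      intro a ha
      have := Finset.card_erase_lt_of_mem ha
      omega
    by_cases hmY : m ∈ Y
    · -- Case 1 : the minimum is in Y ; peel `kGen m` off on the right.
      have hYm : ∀ y ∈ Y, m ≤ y := fun y hy => hmle y (Finset.mem_union_right X hy)
      have hXm : ∀ x ∈ X, m ≤ x := fun x hx => hmle x (Finset.mem_union_left Y hx)
      have hY'up : ∀ y ∈ Y.erase m, m < y := fun y hy =>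
        lt_of_le_of_ne (hYm y (Finset.mem_of_mem_erase hy)) (Ne.symm (Finset.mem_erase.1 hy).1)
      have hX'up : ∀ x ∈ X.erase m, m < x := fun x hx =>
        lt_of_le_of_ne (hXm x (Finset.mem_of_mem_erase hx)) (Ne.symm (Finset.mem_erase.1 hx).1)
      have hvmem : eSet n (X.erase m) * eSet n (Y.erase m) ∈ Submonoid.closure (up n m) :=
        mul_mem (mem_up_eSet hX'up) (mem_up_eSet hY'up)
      have hu : eSet n X * eSet n Y =
          (eSet n (X.erase m) * eSet n (Y.erase m)) * kGen n m := by
        rw [eSet_min_peel hmY hYm]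
        by_cases hmX : m ∈ X
        · rw [eSet_min_peel hmX hXm]
          calc eSet n (X.erase m) * kGen n m * (eSet n (Y.erase m) * kGen n m)
              = eSet n (X.erase m) * (kGen n m * eSet n (Y.erase m) * kGen n m) := by
                simp only [mul_assoc]
            _ = eSet n (X.erase m) * (eSet n (Y.erase m) * kGen n m) := by
                rw [claimA m (mem_up_eSet hY'up)]
            _ = (eSet n (X.erase m) * eSet n (Y.erase m)) * kGen n m := by
                simp only [mul_assoc]
        · rw [Finset.erase_eq_of_notMem hmX, mul_assoc]
      have hpow : ∀ k : ℕ, (eSet n X * eSet n Y) ^ (k + 1) =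
          (eSet n (X.erase m) * eSet n (Y.erase m)) ^ (k + 1) * kGen n m := by
        intro k
        induction k with
        | zero => rw [pow_one, pow_one, hu]
        | succ k ihk =>
          rw [pow_succ, ihk, hu]
          calc (eSet n (X.erase m) * eSet n (Y.erase m)) ^ (k + 1) * kGen n m *
                ((eSet n (X.erase m) * eSet n (Y.erase m)) * kGen n m)
              = (eSet n (X.erase m) * eSet n (Y.erase m)) ^ (k + 1) *
                (kGen n m * (eSet n (X.erase m) * eSet n (Y.erase m)) * kGen n m) := by
                simp only [mul_assoc]
            _ = (eSet n (X.erase m) * eSet n (Y.erase m)) ^ (k + 1) *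
                ((eSet n (X.erase m) * eSet n (Y.erase m)) * kGen n m) := by
                rw [claimA m hvmem]
            _ = (eSet n (X.erase m) * eSet n (Y.erase m)) ^ (k + 1 + 1) * kGen n m := by
                rw [pow_succ _ (k + 1)]; simp only [mul_assoc]
      have hunion : (X.erase m) ∪ (Y.erase m) = (X ∪ Y).erase m :=
        (Finset.erase_union_distrib X Y m).symm
      obtain ⟨j, hj⟩ := ih (X.erase m) (Y.erase m) (by rw [hunion]; exact hcard_erase m hmZ)
      rw [hunion] at hj
      refine ⟨j, ?_⟩
      rw [hpow j, hj]
      exact (eSet_min_peel hmZ hmle).symm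
    · by_cases hMX : M ∈ X
      · -- Case 2 : the maximum is in X ; peel `kGen M` off on the left.
        have hXM : ∀ x ∈ X, x ≤ M := fun x hx => hleM x (Finset.mem_union_left Y hx)
        have hYM : ∀ y ∈ Y, y ≤ M := fun y hy => hleM y (Finset.mem_union_right X hy)
        have hX'dn : ∀ x ∈ X.erase M, x < M := fun x hx =>
          lt_of_le_of_ne (hXM x (Finset.mem_of_mem_erase hx)) (Finset.mem_erase.1 hx).1
        have hY'dn : ∀ y ∈ Y.erase M, y < M := fun y hy =>
          lt_of_le_of_ne (hYM y (Finset.mem_of_mem_erase hy)) (Finset.mem_erase.1 hy).1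
        have hwmem : eSet n (X.erase M) * eSet n (Y.erase M) ∈ Submonoid.closure (dn n M) :=
          mul_mem (mem_dn_eSet hX'dn) (mem_dn_eSet hY'dn)
        have hu : eSet n X * eSet n Y =
            kGen n M * (eSet n (X.erase M) * eSet n (Y.erase M)) := by
          rw [eSet_max_peel hMX hXM]
          by_cases hMY : M ∈ Y
          · rw [eSet_max_peel hMY hYM]
            calc kGen n M * eSet n (X.erase M) * (kGen n M * eSet n (Y.erase M))
                = (kGen n M * eSet n (X.erase M) * kGen n M) * eSet n (Y.erase M) := by
                  simp only [mul_assoc]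
              _ = (kGen n M * eSet n (X.erase M)) * eSet n (Y.erase M) := by
                  rw [claimB M (mem_dn_eSet hX'dn)]
              _ = kGen n M * (eSet n (X.erase M) * eSet n (Y.erase M)) := by
                  simp only [mul_assoc]
          · rw [Finset.erase_eq_of_notMem hMY, mul_assoc]
        have hpow : ∀ k : ℕ, (eSet n X * eSet n Y) ^ (k + 1) =
            kGen n M * (eSet n (X.erase M) * eSet n (Y.erase M)) ^ (k + 1) := by
          intro k
          induction k with
          | zero => rw [pow_one, pow_one, hu]
          | succ k ihk =>
            rw [pow_succ, ihk, hu]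
            calc kGen n M * (eSet n (X.erase M) * eSet n (Y.erase M)) ^ (k + 1) *
                  (kGen n M * (eSet n (X.erase M) * eSet n (Y.erase M)))
                = (kGen n M * (eSet n (X.erase M) * eSet n (Y.erase M)) ^ (k + 1) * kGen n M) *
                  (eSet n (X.erase M) * eSet n (Y.erase M)) := by
                  simp only [mul_assoc]
              _ = (kGen n M * (eSet n (X.erase M) * eSet n (Y.erase M)) ^ (k + 1)) *
                  (eSet n (X.erase M) * eSet n (Y.erase M)) := by
                  rw [claimB M (pow_mem hwmem (k + 1))]
              _ = kGen n M * (eSet n (X.erase M) * eSet n (Y.erase M)) ^ (k + 1 + 1) := by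
                  rw [pow_succ _ (k + 1)]; simp only [mul_assoc]
        have hunion : (X.erase M) ∪ (Y.erase M) = (X ∪ Y).erase M :=
          (Finset.erase_union_distrib X Y M).symm
        obtain ⟨j, hj⟩ := ih (X.erase M) (Y.erase M) (by rw [hunion]; exact hcard_erase M hMZ)
        rw [hunion] at hj
        refine ⟨j, ?_⟩
        rw [hpow j, hj]
        exact (eSet_max_peel hMZ hleM).symm
      · -- Hard case : m ∈ X \ Y and M ∈ Y \ X.
        have hmX : m ∈ X := (Finset.mem_union.1 hmZ).resolve_right hmY
        have hMY : M ∈ Y := (Finset.mem_union.1 hMZ).resolve_left hMX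
        have hmM : m < M :=
          lt_of_le_of_ne (hmle M hMZ) (fun h => hMX (h ▸ hmX))
        have hXm : ∀ x ∈ X, m ≤ x := fun x hx => hmle x (Finset.mem_union_left Y hx)
        have hYM : ∀ y ∈ Y, y ≤ M := fun y hy => hleM y (Finset.mem_union_right X hy)
        have hXup : ∀ x ∈ X.erase m, m < x := fun x hx =>
          lt_of_le_of_ne (hXm x (Finset.mem_of_mem_erase hx)) (Ne.symm (Finset.mem_erase.1 hx).1)
        have hXdn : ∀ x ∈ X.erase m, x < M := fun x hx =>
          lt_of_le_of_ne (hleM x (Finset.mem_union_left Y (Finset.mem_of_mem_erase hx)))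
            (fun h => hMX (h ▸ Finset.mem_of_mem_erase hx))
        have hYdn : ∀ y ∈ Y.erase M, y < M := fun y hy =>
          lt_of_le_of_ne (hYM y (Finset.mem_of_mem_erase hy)) (Finset.mem_erase.1 hy).1
        have hYup : ∀ y ∈ Y.erase M, m < y := fun y hy =>
          lt_of_le_of_ne (hmle y (Finset.mem_union_right X (Finset.mem_of_mem_erase hy)))
            (fun h => hmY (h ▸ Finset.mem_of_mem_erase hy))
        -- abbreviations
        have hp_up : eSet n (X.erase m) ∈ Submonoid.closure (up n m) := mem_up_eSet hXup
        have hq_up : eSet n (Y.erase M) ∈ Submonoid.closure (up n m) := mem_up_eSet hYup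
        have hp_dn : eSet n (X.erase m) ∈ Submonoid.closure (dn n M) := mem_dn_eSet hXdn
        have hq_dn : eSet n (Y.erase M) ∈ Submonoid.closure (dn n M) := mem_dn_eSet hYdn
        have hGM_up : kGen n M ∈ Submonoid.closure (up n m) :=
          Submonoid.subset_closure ⟨M, hmM, rfl⟩
        have hGm_dn : kGen n m ∈ Submonoid.closure (dn n M) :=
          Submonoid.subset_closure ⟨m, hmM, rfl⟩
        have hu : eSet n X * eSet n Y =
            eSet n (X.erase m) * kGen n m * (kGen n M * eSet n (Y.erase M)) := by
          rw [eSet_min_peel hmX hXm, eSet_max_peel hMY hYM]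
        have hstep : ∀ k : ℕ, (eSet n X * eSet n Y) ^ (k + 2) =
            eSet n (X.erase m) * kGen n M *
              (eSet n (Y.erase M) * eSet n (X.erase m)) ^ (k + 1) *
              (kGen n m * eSet n (Y.erase M)) := by
          intro k
          induction k with
          | zero =>
            rw [show (0 : ℕ) + 2 = 1 + 1 from rfl, pow_succ, pow_one, hu]
            calc eSet n (X.erase m) * kGen n m * (kGen n M * eSet n (Y.erase M)) *
                  (eSet n (X.erase m) * kGen n m * (kGen n M * eSet n (Y.erase M)))
                = eSet n (X.erase m) *
                    (kGen n m * (kGen n M * eSet n (Y.erase M) * eSet n (X.erase m)) * kGen n m) *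
                    (kGen n M * eSet n (Y.erase M)) := by simp only [mul_assoc]
              _ = eSet n (X.erase m) *
                    ((kGen n M * eSet n (Y.erase M) * eSet n (X.erase m)) * kGen n m) *
                    (kGen n M * eSet n (Y.erase M)) := by
                  rw [claimA m (mul_mem (mul_mem hGM_up hq_up) hp_up)]
              _ = eSet n (X.erase m) *
                    (kGen n M * (eSet n (Y.erase M) * eSet n (X.erase m) * kGen n m) * kGen n M) *
                    eSet n (Y.erase M) := by simp only [mul_assoc]
              _ = eSet n (X.erase m) *
                    (kGen n M * (eSet n (Y.erase M) * eSet n (X.erase m) * kGen n m)) *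
                    eSet n (Y.erase M) := by
                  rw [claimB M (mul_mem (mul_mem hq_dn hp_dn) hGm_dn)]
              _ = eSet n (X.erase m) * kGen n M *
                    (eSet n (Y.erase M) * eSet n (X.erase m)) ^ (0 + 1) *
                    (kGen n m * eSet n (Y.erase M)) := by
                  simp only [pow_one, mul_assoc, zero_add]
          | succ k ihk =>
            rw [show k + 1 + 2 = (k + 2) + 1 from rfl, pow_succ, ihk, hu]
            calc eSet n (X.erase m) * kGen n M *
                  (eSet n (Y.erase M) * eSet n (X.erase m)) ^ (k + 1) *
                  (kGen n m * eSet n (Y.erase M)) *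
                  (eSet n (X.erase m) * kGen n m * (kGen n M * eSet n (Y.erase M)))
                = eSet n (X.erase m) * kGen n M *
                  (eSet n (Y.erase M) * eSet n (X.erase m)) ^ (k + 1) *
                  (kGen n m * (eSet n (Y.erase M) * eSet n (X.erase m)) * kGen n m) *
                  (kGen n M * eSet n (Y.erase M)) := by simp only [mul_assoc]
              _ = eSet n (X.erase m) * kGen n M *
                  (eSet n (Y.erase M) * eSet n (X.erase m)) ^ (k + 1) *
                  ((eSet n (Y.erase M) * eSet n (X.erase m)) * kGen n m) *
                  (kGen n M * eSet n (Y.erase M)) := by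
                  rw [claimA m (mul_mem hq_up hp_up)]
              _ = eSet n (X.erase m) *
                  (kGen n M *
                    ((eSet n (Y.erase M) * eSet n (X.erase m)) ^ (k + 1) *
                      (eSet n (Y.erase M) * eSet n (X.erase m)) * kGen n m) * kGen n M) *
                  eSet n (Y.erase M) := by simp only [mul_assoc]
              _ = eSet n (X.erase m) *
                  (kGen n M *
                    ((eSet n (Y.erase M) * eSet n (X.erase m)) ^ (k + 1) *
                      (eSet n (Y.erase M) * eSet n (X.erase m)) * kGen n m)) *
                  eSet n (Y.erase M) := by
                  rw [claimB M (mul_mem (mul_mem (pow_mem (mul_mem hq_dn hp_dn) (k + 1))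
                    (mul_mem hq_dn hp_dn)) hGm_dn)]
              _ = eSet n (X.erase m) * kGen n M *
                  ((eSet n (Y.erase M) * eSet n (X.erase m)) ^ (k + 1) *
                    (eSet n (Y.erase M) * eSet n (X.erase m))) *
                  (kGen n m * eSet n (Y.erase M)) := by simp only [mul_assoc]
              _ = eSet n (X.erase m) * kGen n M *
                  (eSet n (Y.erase M) * eSet n (X.erase m)) ^ (k + 1 + 1) *
                  (kGen n m * eSet n (Y.erase M)) := by rw [← pow_succ]
        -- the set of "middle" letters
        have hWsub : (Y.erase M) ∪ (X.erase m) ⊆ (X ∪ Y).erase M := by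
          intro x hx
          rcases Finset.mem_union.1 hx with hx | hx
          · exact Finset.mem_erase.2 ⟨(Finset.mem_erase.1 hx).1,
              Finset.mem_union_right X (Finset.mem_of_mem_erase hx)⟩
          · exact Finset.mem_erase.2 ⟨fun h => hMX (h ▸ Finset.mem_of_mem_erase hx),
              Finset.mem_union_left Y (Finset.mem_of_mem_erase hx)⟩
        obtain ⟨j, hj⟩ := ih (Y.erase M) (X.erase m)
          (le_trans (Finset.card_le_card hWsub) (hcard_erase M hMZ))
        have hWup : ∀ x ∈ (Y.erase M) ∪ (X.erase m), m < x := by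
          intro x hx
          rcases Finset.mem_union.1 hx with hx | hx
          · exact hYup x hx
          · exact hXup x hx
        have hWdn : ∀ x ∈ insert m ((Y.erase M) ∪ (X.erase m)), x < M := by
          intro x hx
          rcases Finset.mem_insert.1 hx with rfl | hx
          · exact hmM
          · rcases Finset.mem_union.1 hx with hx | hx
            · exact hYdn x hx
            · exact hXdn x hx
        have hZeq : insert M (insert m ((Y.erase M) ∪ (X.erase m))) = X ∪ Y := by
          apply Finset.ext
          intro x
          simp only [Finset.mem_insert, Finset.mem_union, Finset.mem_erase]
          constructor
          · rintro (rfl | rfl | ⟨_, h⟩ | ⟨_, h⟩)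
            · exact Or.inr hMY
            · exact Or.inl hmX
            · exact Or.inr h
            · exact Or.inl h
          · rintro (hx | hx)
            · by_cases hxm : x = m
              · exact Or.inr (Or.inl hxm)
              · exact Or.inr (Or.inr (Or.inr ⟨hxm, hx⟩))
            · by_cases hxM : x = M
              · exact Or.inl hxM
              · exact Or.inr (Or.inr (Or.inl ⟨hxM, hx⟩))
        refine ⟨j + 1, ?_⟩
        rw [show j + 1 + 1 = j + 2 from rfl, hstep j, hj]
        calc eSet n (X.erase m) * kGen n M * eSet n ((Y.erase M) ∪ (X.erase m)) *
              (kGen n m * eSet n (Y.erase M))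
            = eSet n (X.erase m) *
                (kGen n M * (eSet n ((Y.erase M) ∪ (X.erase m)) * kGen n m)) *
                eSet n (Y.erase M) := by simp only [mul_assoc]
          _ = eSet n (X.erase m) *
                (kGen n M * eSet n (insert m ((Y.erase M) ∪ (X.erase m)))) *
                eSet n (Y.erase M) := by rw [eSet_insert_min hWup]
          _ = eSet n (X.erase m) *
                eSet n (insert M (insert m ((Y.erase M) ∪ (X.erase m)))) *
                eSet n (Y.erase M) := by rw [eSet_insert_max hWdn]
          _ = eSet n (X.erase m) * eSet n (X ∪ Y) * eSet n (Y.erase M) := by rw [hZeq]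
          _ = eSet n (X ∪ Y) * eSet n (Y.erase M) := by
              rw [absLP (mem_gens_eSet (fun x hx =>
                Finset.mem_union_left Y (Finset.mem_of_mem_erase hx)))]
          _ = eSet n (X ∪ Y) := by
              rw [absRP (mem_gens_eSet (fun x hx =>
                Finset.mem_union_right X (Finset.mem_of_mem_erase hx)))]

end KisTmp

/-- `e_X e_Y` is idempotent iff `e_X e_Y = e_{X ∪ Y}` in `K_n`. -/
theorem eSet_mul_isIdempotent_iff (n : ℕ) (X Y : Finset (Fin n)) :
    IsIdempotentElem (eSet n X * eSet n Y) ↔ eSet n X * eSet n Y = eSet n (X ∪ Y) := by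
  constructor
  · intro h
    obtain ⟨k, hk⟩ := KisTmp.key (n := n) ((X ∪ Y).card) X Y le_rfl
    exact (h.pow_succ_eq k).symm.trans hk
  · intro h
    rw [IsIdempotentElem, h]
    exact KisTmp.absRP (KisTmp.mem_gens_eSet (subset_refl _))
end

section
/- For subsets X, Y of {1,...,n}, the following are equivalent: (1) every element of X \ Y is greater than every element of Y \ X; (2) e_X e_Y is idempotent and e_X e_Y e_X = e_Y e_X e_Y = e_X e_Y in Kiselman's semigroup K_n. -/
namespace KiselmanAux

variable {n : ℕ}

/-- Product of a list of generators. -/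
def P (n : ℕ) (l : List (Fin n)) : Kiselman n := (l.map (kGen n)).prod

lemma eSet_eq (X : Finset (Fin n)) : eSet n X = P n ((X.sort (· ≤ ·)).reverse) := rfl

@[simp] lemma P_nil : P n [] = 1 := rfl

@[simp] lemma P_cons (i : Fin n) (l : List (Fin n)) :
    P n (i :: l) = kGen n i * P n l := by
  simp [P]

@[simp] lemma P_append (l₁ l₂ : List (Fin n)) :
    P n (l₁ ++ l₂) = P n l₁ * P n l₂ := by
  simp [P]

lemma sound {w v : FreeMonoid (Fin n)} (h : kiselmanRel n w v) :
    PresentedMonoid.mk (kiselmanRel n) w = PresentedMonoid.mk (kiselmanRel n) v :=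
  Quotient.sound (ConGen.Rel.of _ _ h)

lemma kg_idem (i : Fin n) : kGen n i * kGen n i = kGen n i :=
  sound (Or.inl ⟨i, rfl, rfl⟩)

lemma kg_rel2 {i j : Fin n} (h : i < j) :
    kGen n i * kGen n j * kGen n i = kGen n j * kGen n i :=
  sound (Or.inr (Or.inl ⟨i, j, h, rfl, rfl⟩))

lemma kg_rel3 {i j : Fin n} (h : i < j) :
    kGen n j * kGen n i * kGen n j = kGen n j * kGen n i :=
  sound (Or.inr (Or.inr ⟨i, j, h, rfl, rfl⟩))

/-- Right absorption: a_i · v · a_i = a_i · v when all letters of v are < i. -/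
lemma absorb_right {i : Fin n} : ∀ {v : List (Fin n)}, (∀ m ∈ v, m < i) →
    kGen n i * P n v * kGen n i = kGen n i * P n v
  | [], _ => by simpa using kg_idem i
  | m :: v', h => by
    have hm : m < i := h m (by simp)
    have hv' : ∀ x ∈ v', x < i := fun x hx => h x (by simp [hx])
    have e1 : kGen n i * kGen n m = kGen n i * kGen n m * kGen n i :=
      (kg_rel3 hm).symm
    calc kGen n i * P n (m :: v') * kGen n i
        = kGen n i * kGen n m * P n v' * kGen n i := by
          rw [P_cons, ← mul_assoc]
      _ = kGen n i * kGen n m * kGen n i * P n v' * kGen n i := by rw [← e1]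
      _ = kGen n i * kGen n m * (kGen n i * P n v' * kGen n i) := by
          simp only [mul_assoc]
      _ = kGen n i * kGen n m * (kGen n i * P n v') := by rw [absorb_right hv']
      _ = kGen n i * kGen n m * kGen n i * P n v' := by simp only [mul_assoc]
      _ = kGen n i * kGen n m * P n v' := by rw [kg_rel3 hm]
      _ = kGen n i * P n (m :: v') := by rw [P_cons, ← mul_assoc]

/-- Left absorption: a_i · u · a_i = u · a_i when all letters of u are > i. -/
lemma absorb_left {i : Fin n} (u : List (Fin n)) (h : ∀ m ∈ u, i < m) :
    kGen n i * (P n u * kGen n i) = P n u * kGen n i := by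
  induction u using List.reverseRecOn with
  | nil => simpa using kg_idem i
  | append_singleton u' m ih =>
    have hm : i < m := h m (by simp)
    have hu' : ∀ x ∈ u', i < x := fun x hx => h x (by simp [hx])
    have e1 : kGen n m * kGen n i = kGen n i * kGen n m * kGen n i :=
      (kg_rel2 hm).symm
    calc kGen n i * (P n (u' ++ [m]) * kGen n i)
        = kGen n i * (P n u' * (kGen n m * kGen n i)) := by
          rw [P_append]; simp [mul_assoc]
      _ = kGen n i * (P n u' * (kGen n i * kGen n m * kGen n i)) := by rw [← e1]
      _ = kGen n i * (P n u' * kGen n i) * (kGen n m * kGen n i) := by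
          simp only [mul_assoc]
      _ = P n u' * kGen n i * (kGen n m * kGen n i) := by rw [ih hu']
      _ = P n u' * (kGen n i * kGen n m * kGen n i) := by simp only [mul_assoc]
      _ = P n u' * (kGen n m * kGen n i) := by rw [kg_rel2 hm]
      _ = P n (u' ++ [m]) * kGen n i := by rw [P_append]; simp [mul_assoc]

/-- The descending list of a finset is pairwise `>`. -/
lemma dList_pairwise (Z : Finset (Fin n)) :
    ((Z.sort (· ≤ ·)).reverse).Pairwise (· > ·) := by
  rw [List.pairwise_reverse]
  exact Z.sortedLT_sort.pairwise

lemma mem_dList {Z : Finset (Fin n)} {i : Fin n} :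
    i ∈ (Z.sort (· ≤ ·)).reverse ↔ i ∈ Z := by
  simp [Finset.mem_sort]

/-- Split the descending list at a member. -/
lemma dList_split {Z : Finset (Fin n)} {i : Fin n} (hi : i ∈ Z) :
    ∃ u v : List (Fin n), (Z.sort (· ≤ ·)).reverse = u ++ i :: v ∧
      (∀ x ∈ u, i < x) ∧ (∀ x ∈ v, x < i) := by
  obtain ⟨u, v, huv⟩ := List.append_of_mem (mem_dList.mpr hi)
  refine ⟨u, v, huv, ?_, ?_⟩
  · have := dList_pairwise Z
    rw [huv, List.pairwise_append] at this
    intro x hx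
    exact this.2.2 x hx i (by simp)
  · have := dList_pairwise Z
    rw [huv, List.pairwise_append] at this
    intro x hx
    exact (List.pairwise_cons.mp this.2.1).1 x hx

lemma eSet_mul_gen {Z : Finset (Fin n)} {i : Fin n} (hi : i ∈ Z) :
    eSet n Z * kGen n i = eSet n Z := by
  obtain ⟨u, v, huv, _, hv⟩ := dList_split hi
  rw [eSet_eq, huv, P_append, P_cons]
  calc P n u * (kGen n i * P n v) * kGen n i
      = P n u * (kGen n i * P n v * kGen n i) := by simp only [mul_assoc]
    _ = P n u * (kGen n i * P n v) := by rw [absorb_right hv]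

lemma gen_mul_eSet {Z : Finset (Fin n)} {i : Fin n} (hi : i ∈ Z) :
    kGen n i * eSet n Z = eSet n Z := by
  obtain ⟨u, v, huv, hu, _⟩ := dList_split hi
  rw [eSet_eq, huv, P_append, P_cons]
  calc kGen n i * (P n u * (kGen n i * P n v))
      = kGen n i * (P n u * kGen n i) * P n v := by simp only [mul_assoc]
    _ = P n u * kGen n i * P n v := by rw [absorb_left u hu]
    _ = P n u * (kGen n i * P n v) := by simp only [mul_assoc]

lemma eSet_mul_P {Z : Finset (Fin n)} : ∀ {l : List (Fin n)}, (∀ m ∈ l, m ∈ Z) →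
    eSet n Z * P n l = eSet n Z
  | [], _ => by simp
  | m :: l', h => by
    have : eSet n Z * P n (m :: l') = (eSet n Z * kGen n m) * P n l' := by
      rw [P_cons, mul_assoc]
    rw [this, eSet_mul_gen (h m (by simp)), eSet_mul_P (fun x hx => h x (by simp [hx]))]

lemma P_mul_eSet {Z : Finset (Fin n)} : ∀ {l : List (Fin n)}, (∀ m ∈ l, m ∈ Z) →
    P n l * eSet n Z = eSet n Z
  | [], _ => by simp
  | m :: l', h => by
    rw [P_cons, mul_assoc, P_mul_eSet (fun x hx => h x (by simp [hx])),
      gen_mul_eSet (h m (by simp))]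

lemma eSet_mul_eSet {W Z : Finset (Fin n)} (h : W ⊆ Z) :
    eSet n W * eSet n Z = eSet n Z := by
  rw [eSet_eq W]
  exact P_mul_eSet (fun m hm => h (mem_dList.mp hm))

lemma eSet_mul_eSet' {W Z : Finset (Fin n)} (h : W ⊆ Z) :
    eSet n Z * eSet n W = eSet n Z := by
  rw [eSet_eq W]
  exact eSet_mul_P (fun m hm => h (mem_dList.mp hm))

/-- Peeling off the maximum element. -/
lemma eSet_max {Z : Finset (Fin n)} {m : Fin n} (hm : m ∈ Z) (hmax : ∀ x ∈ Z, x ≤ m) :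
    eSet n Z = kGen n m * eSet n (Z.erase m) := by
  have hperm : List.Perm (Z.sort (· ≤ ·)) ((Z.erase m).sort (· ≤ ·) ++ [m]) := by
    refine (Z.sort_perm_toList _).trans ?_
    refine List.Perm.trans ?_ (List.perm_append_singleton m _).symm
    refine List.Perm.trans ?_ (((Z.erase m).sort_perm_toList _).symm.cons m)
    conv_lhs => rw [← Finset.insert_erase hm]
    exact Finset.toList_insert (Finset.notMem_erase m Z)
  have hsort : Z.sort (· ≤ ·) = (Z.erase m).sort (· ≤ ·) ++ [m] := by
    refine List.Perm.eq_of_pairwise' (Z.pairwise_sort _) ?_ hperm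
    rw [List.pairwise_append]
    refine ⟨(Z.erase m).pairwise_sort _, by simp, ?_⟩
    intro a ha b hb
    rw [List.mem_singleton] at hb
    subst hb
    exact hmax a (Finset.mem_of_mem_erase ((Finset.mem_sort _).mp ha))
  rw [eSet_eq, eSet_eq, hsort]
  simp

/-- The key lemma: under the order condition, `e_X e_Y = e_{X ∪ Y}`. -/
lemma key (X : Finset (Fin n)) : ∀ Y : Finset (Fin n),
    (∀ x ∈ X \ Y, ∀ y ∈ Y \ X, y < x) → eSet n X * eSet n Y = eSet n (X ∪ Y) := by
  induction X using Finset.strongInduction with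
  | _ X ih =>
    intro Y hcond
    by_cases hXY : X ⊆ Y
    · rw [eSet_mul_eSet hXY, Finset.union_eq_right.mpr hXY]
    · obtain ⟨a, haX, haY⟩ := Finset.not_subset.mp hXY
      have hne : (X ∪ Y).Nonempty := ⟨a, Finset.mem_union_left _ haX⟩
      set m := (X ∪ Y).max' hne with hm
      have hmmem : m ∈ X ∪ Y := (X ∪ Y).max'_mem hne
      have hmax : ∀ x ∈ X ∪ Y, x ≤ m := fun x hx => (X ∪ Y).le_max' x hx
      have hmX : m ∈ X := by
        by_contra hmX
        have hmY : m ∈ Y := by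
          rcases Finset.mem_union.mp hmmem with h | h
          · exact absurd h hmX
          · exact h
        have : m < a := hcond a (Finset.mem_sdiff.mpr ⟨haX, haY⟩) m
          (Finset.mem_sdiff.mpr ⟨hmY, hmX⟩)
        exact absurd (hmax a (Finset.mem_union_left _ haX)) (not_le.mpr this)
      have hXm : eSet n X = kGen n m * eSet n (X.erase m) :=
        eSet_max hmX (fun x hx => hmax x (Finset.mem_union_left _ hx))
      have hssub : X.erase m ⊂ X := Finset.erase_ssubset hmX
      have hemb : ∀ x ∈ X.erase m, x < m := by
        intro x hx
        exact lt_of_le_of_ne (hmax x (Finset.mem_union_left _ (Finset.mem_of_mem_erase hx)))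
          (Finset.ne_of_mem_erase hx)
      have hUnion : eSet n (X ∪ Y) = kGen n m * eSet n ((X ∪ Y).erase m) :=
        eSet_max hmmem hmax
      by_cases hmY : m ∈ Y
      · -- peel m off both
        have hYm : eSet n Y = kGen n m * eSet n (Y.erase m) :=
          eSet_max hmY (fun x hx => hmax x (Finset.mem_union_right _ hx))
        have hcond' : ∀ x ∈ X.erase m \ Y.erase m, ∀ y ∈ Y.erase m \ X.erase m, y < x := by
          intro x hx y hy
          rw [Finset.mem_sdiff, Finset.mem_erase, Finset.mem_erase] at hx hy
          refine hcond x ?_ y ?_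
          · exact Finset.mem_sdiff.mpr ⟨hx.1.2, fun hxy => hx.2 ⟨hx.1.1, hxy⟩⟩
          · exact Finset.mem_sdiff.mpr ⟨hy.1.2, fun hyx => hy.2 ⟨hy.1.1, hyx⟩⟩
        have hdlist : ∀ x ∈ ((X.erase m).sort (· ≤ ·)).reverse, x < m :=
          fun x hx => hemb x (mem_dList.mp hx)
        calc eSet n X * eSet n Y
            = kGen n m * eSet n (X.erase m) * (kGen n m * eSet n (Y.erase m)) := by
              rw [← hXm, ← hYm]
          _ = kGen n m * P n ((X.erase m).sort (· ≤ ·)).reverse * kGen n m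
              * eSet n (Y.erase m) := by
              rw [← eSet_eq]; simp only [mul_assoc]
          _ = kGen n m * P n ((X.erase m).sort (· ≤ ·)).reverse * eSet n (Y.erase m) := by
              rw [absorb_right hdlist]
          _ = kGen n m * (eSet n (X.erase m) * eSet n (Y.erase m)) := by
              rw [← eSet_eq]; simp only [mul_assoc]
          _ = kGen n m * eSet n (X.erase m ∪ Y.erase m) := by
              rw [ih _ hssub _ hcond']
          _ = eSet n (X ∪ Y) := by
              rw [hUnion, Finset.erase_union_distrib]
      · -- m only in X
        have hcond' : ∀ x ∈ X.erase m \ Y, ∀ y ∈ Y \ X.erase m, y < x := by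
          intro x hx y hy
          rw [Finset.mem_sdiff, Finset.mem_erase] at hx
          rw [Finset.mem_sdiff, Finset.mem_erase] at hy
          refine hcond x (Finset.mem_sdiff.mpr ⟨hx.1.2, hx.2⟩) y ?_
          refine Finset.mem_sdiff.mpr ⟨hy.1, fun hyX => ?_⟩
          have hym : y ≠ m := fun h => hmY (h ▸ hy.1)
          exact hy.2 ⟨hym, hyX⟩
        calc eSet n X * eSet n Y
            = kGen n m * (eSet n (X.erase m) * eSet n Y) := by
              rw [hXm]; simp only [mul_assoc]
          _ = kGen n m * eSet n (X.erase m ∪ Y) := by rw [ih _ hssub _ hcond']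
          _ = eSet n (X ∪ Y) := by
              rw [hUnion, Finset.erase_union_distrib, Finset.erase_eq_of_notMem hmY]

/-! ### The separating monoid for the reverse direction -/

/-- The idempotent `f` in `End (Fin 3)`. -/
def fEnd : Function.End (Fin 3) := fun t => if t = 1 then 0 else t

/-- The idempotent `g` in `End (Fin 3)`. -/
def gEnd : Function.End (Fin 3) := fun t => if t = 0 then 2 else t

lemma ff : fEnd * fEnd = fEnd := by funext t; fin_cases t <;> rfl
lemma gg : gEnd * gEnd = gEnd := by funext t; fin_cases t <;> rfl
lemma fgf : fEnd * gEnd * fEnd = gEnd * fEnd := by funext t; fin_cases t <;> rfl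
lemma gfg : gEnd * fEnd * gEnd = gEnd * fEnd := by funext t; fin_cases t <;> rfl
lemma fg_not_idem : fEnd * gEnd * (fEnd * gEnd) ≠ fEnd * gEnd := by
  intro h
  exact absurd (congrFun h 1) (by decide)

variable {x y : Fin n}

/-- The map sending `a_x ↦ f`, `a_y ↦ g` and all other generators to `1`. -/
def ψ (x y : Fin n) : Fin n → Function.End (Fin 3) :=
  fun k => if k = x then fEnd else if k = y then gEnd else 1

lemma ψ_idem (k : Fin n) : ψ x y k * ψ x y k = ψ x y k := by
  unfold ψ
  split_ifs
  · exact ff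
  · exact gg
  · exact one_mul 1

lemma ψ_rel (hxy : x < y) {i j : Fin n} (hij : i < j) :
    ψ x y i * ψ x y j * ψ x y i = ψ x y j * ψ x y i ∧
    ψ x y j * ψ x y i * ψ x y j = ψ x y j * ψ x y i := by
  have hxyne : x ≠ y := ne_of_lt hxy
  rcases eq_or_ne i x with hix | hix
  · rcases eq_or_ne j y with hjy | hjy
    · have h1 : ψ x y i = fEnd := by simp [ψ, hix]
      have h2 : ψ x y j = gEnd := by simp [ψ, hjy, Ne.symm hxyne]
      rw [h1, h2]
      exact ⟨fgf, gfg⟩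
    · have hjx : j ≠ x := fun h => absurd hij (by simp [hix, h])
      have h1 : ψ x y i = fEnd := by simp [ψ, hix]
      have h2 : ψ x y j = 1 := by simp [ψ, hjx, hjy]
      rw [h1, h2]
      refine ⟨?_, ?_⟩ <;> simp [ff]
  · rcases eq_or_ne i y with hiy | hiy
    · have hjx : j ≠ x := fun h => absurd hij (by rw [hiy, h]; exact not_lt.mpr (le_of_lt hxy))
      have hjy : j ≠ y := fun h => absurd hij (by simp [hiy, h])
      have h1 : ψ x y i = gEnd := by simp [ψ, hiy, Ne.symm hxyne]
      have h2 : ψ x y j = 1 := by simp [ψ, hjx, hjy]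
      rw [h1, h2]
      refine ⟨?_, ?_⟩ <;> simp [gg]
    · have h1 : ψ x y i = 1 := by simp [ψ, hix, hiy]
      rcases eq_or_ne j x with hjx | hjx
      · have h2 : ψ x y j = fEnd := by simp [ψ, hjx]
        rw [h1, h2]
        refine ⟨?_, ?_⟩ <;> simp [ff]
      · rcases eq_or_ne j y with hjy | hjy
        · have h2 : ψ x y j = gEnd := by simp [ψ, hjx, hjy, Ne.symm hxyne]
          rw [h1, h2]
          refine ⟨?_, ?_⟩ <;> simp [gg]
        · have h2 : ψ x y j = 1 := by simp [ψ, hjx, hjy]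
          rw [h1, h2]
          simp

lemma ψ_lift_rel (hxy : x < y) : ∀ a b : FreeMonoid (Fin n), kiselmanRel n a b →
    FreeMonoid.lift (ψ x y) a = FreeMonoid.lift (ψ x y) b := by
  rintro a b (⟨i, rfl, rfl⟩ | ⟨i, j, hij, rfl, rfl⟩ | ⟨i, j, hij, rfl, rfl⟩) <;>
    simp only [map_mul, FreeMonoid.lift_eval_of]
  · exact ψ_idem i
  · exact (ψ_rel hxy hij).1
  · exact (ψ_rel hxy hij).2

/-- The homomorphism `K_n → End (Fin 3)`. -/
noncomputable def φ (hxy : x < y) : Kiselman n →* Function.End (Fin 3) :=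
  PresentedMonoid.lift (ψ x y) (ψ_lift_rel hxy)

lemma φ_gen (hxy : x < y) (i : Fin n) : φ hxy (kGen n i) = ψ x y i := rfl

lemma prod_ψ_left (hxy : x < y) : ∀ l : List (Fin n), (∀ k ∈ l, k ≠ y) →
    (l.map (ψ x y)).prod = if x ∈ l then fEnd else 1
  | [], _ => by simp
  | k :: l', h => by
    have hk : k ≠ y := h k (by simp)
    have ih := prod_ψ_left hxy l' (fun a ha => h a (by simp [ha]))
    rcases eq_or_ne k x with hkx | hkx
    · have hψk : ψ x y k = fEnd := by simp [ψ, hkx]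
      rw [List.map_cons, List.prod_cons, hψk, ih,
        if_pos (List.mem_cons.mpr (Or.inl hkx.symm))]
      split_ifs <;> [exact ff; exact mul_one fEnd]
    · have hψk : ψ x y k = 1 := by simp [ψ, hkx, hk]
      rw [List.map_cons, List.prod_cons, hψk, one_mul, ih]
      simp [List.mem_cons, show ¬x = k from fun hh => hkx hh.symm]

lemma prod_ψ_right (hxy : x < y) : ∀ l : List (Fin n), (∀ k ∈ l, k ≠ x) →
    (l.map (ψ x y)).prod = if y ∈ l then gEnd else 1
  | [], _ => by simp
  | k :: l', h => by
    have hk : k ≠ x := h k (by simp)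
    have ih := prod_ψ_right hxy l' (fun a ha => h a (by simp [ha]))
    rcases eq_or_ne k y with hky | hky
    · have hψk : ψ x y k = gEnd := by simp [ψ, hky, Ne.symm (ne_of_lt hxy)]
      rw [List.map_cons, List.prod_cons, hψk, ih,
        if_pos (List.mem_cons.mpr (Or.inl hky.symm))]
      split_ifs <;> [exact gg; exact mul_one gEnd]
    · have hψk : ψ x y k = 1 := by simp [ψ, hk, hky]
      rw [List.map_cons, List.prod_cons, hψk, one_mul, ih]
      simp [List.mem_cons, show ¬y = k from fun hh => hky hh.symm]

lemma φ_eSet_left (hxy : x < y) {Z : Finset (Fin n)} (hx : x ∈ Z) (hy : y ∉ Z) :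
    φ hxy (eSet n Z) = fEnd := by
  rw [eSet_eq, P, map_list_prod]
  rw [List.map_map]
  have : (φ hxy) ∘ (kGen n) = ψ x y := rfl
  rw [this, prod_ψ_left hxy _ (fun k hk => fun h => hy (h ▸ mem_dList.mp hk)),
    if_pos (mem_dList.mpr hx)]

lemma φ_eSet_right (hxy : x < y) {Z : Finset (Fin n)} (hy : y ∈ Z) (hx : x ∉ Z) :
    φ hxy (eSet n Z) = gEnd := by
  rw [eSet_eq, P, map_list_prod]
  rw [List.map_map]
  have : (φ hxy) ∘ (kGen n) = ψ x y := rfl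
  rw [this, prod_ψ_right hxy _ (fun k hk => fun h => hx (h ▸ mem_dList.mp hk)),
    if_pos (mem_dList.mpr hy)]

end KiselmanAux

open KiselmanAux in
/-- The braid relation for idempotents: `X \ Y > Y \ X` elementwise iff `e_X e_Y` is
idempotent and `e_X e_Y e_X = e_Y e_X e_Y = e_X e_Y`. -/
theorem braid_iff (n : ℕ) (X Y : Finset (Fin n)) :
    (∀ x ∈ X \ Y, ∀ y ∈ Y \ X, y < x) ↔
      (IsIdempotentElem (eSet n X * eSet n Y) ∧
        eSet n X * eSet n Y * eSet n X = eSet n X * eSet n Y ∧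
        eSet n Y * eSet n X * eSet n Y = eSet n X * eSet n Y) := by
  constructor
  · intro h
    have hk := key X Y h
    refine ⟨?_, ?_, ?_⟩
    · show eSet n X * eSet n Y * (eSet n X * eSet n Y) = eSet n X * eSet n Y
      rw [hk]
      exact eSet_mul_eSet (le_refl _)
    · rw [hk]
      exact eSet_mul_eSet' Finset.subset_union_left
    · rw [mul_assoc, hk]
      exact eSet_mul_eSet Finset.subset_union_right
  · rintro ⟨hidem, -, -⟩
    intro a ha b hb
    rw [Finset.mem_sdiff] at ha hb
    by_contra hab
    have hne : a ≠ b := fun h => ha.2 (h ▸ hb.1)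
    have hxy : a < b := lt_of_le_of_ne (not_lt.mp hab) hne
    have h1 : φ hxy (eSet n X) = fEnd := φ_eSet_left hxy ha.1 hb.2
    have h2 : φ hxy (eSet n Y) = gEnd := φ_eSet_right hxy hb.1 ha.2
    have hid : eSet n X * eSet n Y * (eSet n X * eSet n Y) = eSet n X * eSet n Y := hidem
    have h3 : φ hxy (eSet n X * eSet n Y) = fEnd * gEnd := by rw [map_mul, h1, h2]
    have h4 : φ hxy (eSet n X * eSet n Y * (eSet n X * eSet n Y))
        = φ hxy (eSet n X * eSet n Y) := by rw [hid]
    rw [map_mul, h3] at h4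
    exact fg_not_idem h4
end

section
/- The set M_n of monotone n-tuples of subsets of {1,...,n}, with operation (X * Y)_i = ⋃_{j ∈ Y_i} X_j, is a monoid with identity element ({1}, {2}, ..., {n}). -/
/-- A tuple of subsets of `{1,...,n}` is monotone if for `i < j`, every element of
`X j \ X i` exceeds every element of `X i \ X j`. -/
def Mono (n : ℕ) (X : Fin n → Finset (Fin n)) : Prop :=
  ∀ i j : Fin n, i < j → ∀ x ∈ X j \ X i, ∀ y ∈ X i \ X j, y < x

/-- The operation on tuples: `(X * Y) i = ⋃_{j ∈ Y i} X j`. -/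
def starOp (n : ℕ) (X Y : Fin n → Finset (Fin n)) : Fin n → Finset (Fin n) :=
  fun i => (Y i).biUnion X

/-- `M_n` with the operation `(X * Y) i = ⋃_{j ∈ Y i} X j` is a monoid with identity
`({1}, {2}, ..., {n})`: monotonicity is closed under the operation, the operation is
associative, and the tuple of singletons is a two-sided identity. -/
theorem monoTuple_monoid (n : ℕ) :
    (∀ X Y : Fin n → Finset (Fin n), Mono n X → Mono n Y → Mono n (starOp n X Y)) ∧
    (∀ X Y Z : Fin n → Finset (Fin n), starOp n (starOp n X Y) Z = starOp n X (starOp n Y Z)) ∧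
    (∀ X : Fin n → Finset (Fin n), starOp n X (fun i => {i}) = X) ∧
    (∀ X : Fin n → Finset (Fin n), starOp n (fun i => {i}) X = X) := by
  refine ⟨?_, ?_, ?_, ?_⟩
  · intro X Y hX hY i j hij x hx y hy
    simp only [starOp, Finset.mem_sdiff, Finset.mem_biUnion, not_exists, not_and] at hx hy
    obtain ⟨⟨a, haY, hxa⟩, hxni⟩ := hx
    obtain ⟨⟨b, hbY, hyb⟩, hynj⟩ := hy
    have haYi : a ∉ Y i := fun h => hxni a h hxa
    have hbYj : b ∉ Y j := fun h => hynj b h hyb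
    have hba : b < a := hY i j hij a (Finset.mem_sdiff.2 ⟨haY, haYi⟩) b
      (Finset.mem_sdiff.2 ⟨hbY, hbYj⟩)
    exact hX b a hba x (Finset.mem_sdiff.2 ⟨hxa, fun h => hxni b hbY h⟩) y
      (Finset.mem_sdiff.2 ⟨hyb, fun h => hynj a haY h⟩)
  · intro X Y Z
    funext i
    ext x
    simp only [starOp, Finset.mem_biUnion]
    constructor
    · rintro ⟨j, hj, k, hk, hx⟩
      exact ⟨k, ⟨j, hj, hk⟩, hx⟩
    · rintro ⟨k, ⟨j, hj, hk⟩, hx⟩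
      exact ⟨j, hj, k, hk, hx⟩
  · intro X
    funext i
    simp [starOp]
  · intro X
    funext i
    simp only [starOp]
    exact Finset.biUnion_singleton_eq_self
end

section
/- If (X_1,...,X_n) and (Y_1,...,Y_n) are monotone tuples of subsets of {1,...,n}, then the tuple (Z_1,...,Z_n) with Z_i = ⋃_{j ∈ Y_i} X_j is monotone. -/
/-- Monotonicity of tuples is preserved by the operation `Z i = ⋃_{j ∈ Y i} X j`. -/
theorem mono_star (n : ℕ) (X Y : Fin n → Finset (Fin n))
    (hX : Mono n X) (hY : Mono n Y) : Mono n (starOp n X Y) := by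
  intro i i' hii' x hx y hy
  simp only [starOp, Finset.mem_sdiff, Finset.mem_biUnion, not_exists, not_and] at hx hy
  obtain ⟨⟨j, hjY, hxj⟩, hxn⟩ := hx
  obtain ⟨⟨k, hkY, hyk⟩, hyn⟩ := hy
  have hjni : j ∉ Y i := fun h => hxn j h hxj
  have hkni' : k ∉ Y i' := fun h => hyn k h hyk
  have hkj : k < j := hY i i' hii' j (Finset.mem_sdiff.2 ⟨hjY, hjni⟩) k
    (Finset.mem_sdiff.2 ⟨hkY, hkni'⟩)
  exact hX k j hkj x (Finset.mem_sdiff.2 ⟨hxj, hxn k hkY⟩) y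
    (Finset.mem_sdiff.2 ⟨hyk, hyn j hjY⟩)
end

section
/- If φ is an endomorphism of Kiselman's semigroup K_n and φ(a_i) = e_{X_i} for each i, then the tuple (X_1,...,X_n) is monotone. -/
/-! ### Auxiliary: a concrete model detecting the relation `ab ≠ ba` in `K₂`. -/

def kA : Function.End (Fin 3) := ![0, 0, 2]
def kB : Function.End (Fin 3) := ![2, 1, 2]

lemma kAA : kA * kA = kA := by funext x; fin_cases x <;> rfl
lemma kBB : kB * kB = kB := by funext x; fin_cases x <;> rfl
lemma kABA : kA * kB * kA = kB * kA := by funext x; fin_cases x <;> rfl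
lemma kBAB : kB * kA * kB = kB * kA := by funext x; fin_cases x <;> rfl
lemma kABne : kA * kB ≠ kB * kA := fun hcon => absurd (congrFun hcon 1) (by decide)

/-- Send `p ↦ kA`, `q ↦ kB`, all other generators to `1`. -/
def kf {n : ℕ} (p q : Fin n) : Fin n → Function.End (Fin 3) :=
  fun k => if k = p then kA else if k = q then kB else 1

lemma kf_cases {n : ℕ} (p q k : Fin n) :
    kf p q k = kA ∨ kf p q k = kB ∨ kf p q k = 1 := by
  unfold kf; split_ifs <;> simp

lemma kf_idem {n : ℕ} (p q k : Fin n) : kf p q k * kf p q k = kf p q k := by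
  rcases kf_cases p q k with h | h | h <;> rw [h]
  · exact kAA
  · exact kBB
  · exact one_mul 1

lemma kf_rel {n : ℕ} {p q : Fin n} (hpq : p < q) {i j : Fin n} (hij : i < j) :
    kf p q i * kf p q j * kf p q i = kf p q j * kf p q i ∧
    kf p q j * kf p q i * kf p q j = kf p q j * kf p q i := by
  unfold kf
  split_ifs <;>
    first
      | (exfalso; subst_vars; first
          | exact absurd hij (lt_irrefl _)
          | exact absurd hij (lt_asymm hpq))
      | (constructor <;> simp [kAA, kBB, kABA, kBAB])

lemma kf_compat {n : ℕ} {p q : Fin n} (hpq : p < q) :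
    ∀ a b : FreeMonoid (Fin n), kiselmanRel n a b →
      FreeMonoid.lift (kf p q) a = FreeMonoid.lift (kf p q) b := by
  rintro a b (⟨i, rfl, rfl⟩ | ⟨i, j, hij, rfl, rfl⟩ | ⟨i, j, hij, rfl, rfl⟩) <;>
    simp only [map_mul, FreeMonoid.lift_eval_of]
  · exact kf_idem p q i
  · exact (kf_rel hpq hij).1
  · exact (kf_rel hpq hij).2

/-- The homomorphism `K_n →* End (Fin 3)` induced by `kf`. -/
def kPsi {n : ℕ} {p q : Fin n} (hpq : p < q) : Kiselman n →* Function.End (Fin 3) :=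
  PresentedMonoid.lift (kf p q) (kf_compat hpq)

lemma kf_prod {n : ℕ} {p q : Fin n} (hpq : p < q) (l : List (Fin n))
    (hl : l.Pairwise (fun a b => b < a)) :
    (l.map (kf p q)).prod = (if q ∈ l then kB else 1) * (if p ∈ l then kA else 1) := by
  induction l with
  | nil => simp
  | cons a t ih =>
    rw [List.pairwise_cons] at hl
    have ht := ih hl.2
    simp only [List.map_cons, List.prod_cons, ht, List.mem_cons]
    by_cases hap : a = p
    · subst hap
      have hqt : q ∉ t := fun hq => absurd (hl.1 q hq) (not_lt.mpr hpq.le)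
      have hpt : a ∉ t := fun hp => lt_irrefl a (hl.1 a hp)
      have hqa : ¬ (q = a) := fun e => absurd hpq (e ▸ lt_irrefl a)
      simp only [kf, if_pos rfl, if_neg hqt, if_neg hpt, if_neg hqa, hqa, hpt,
        false_or, or_false, if_neg (fun h : q = a ∨ q ∈ t => h.elim hqa hqt)]
      simp
    · by_cases haq : a = q
      · subst haq
        have hqt : a ∉ t := fun hq => lt_irrefl a (hl.1 a hq)
        have hpa : ¬ (p = a) := fun e => absurd hpq (e ▸ lt_irrefl a)
        simp only [kf, if_neg hap, if_pos rfl, if_neg hqt, hqt, hpa,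
          true_or, if_pos, false_or]
        simp
      · have h1 : kf p q a = 1 := by simp [kf, hap, haq]
        have hp' : (p = a ∨ p ∈ t) ↔ p ∈ t := by
          constructor
          · rintro (e | h)
            · exact absurd e.symm hap
            · exact h
          · exact Or.inr
        have hq' : (q = a ∨ q ∈ t) ↔ q ∈ t := by
          constructor
          · rintro (e | h)
            · exact absurd e.symm haq
            · exact h
          · exact Or.inr
        rw [h1, one_mul, if_congr hp' rfl rfl, if_congr hq' rfl rfl]

lemma kPsi_eSet {n : ℕ} {p q : Fin n} (hpq : p < q) (Y : Finset (Fin n)) :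
    kPsi hpq (eSet n Y) = (if q ∈ Y then kB else 1) * (if p ∈ Y then kA else 1) := by
  unfold eSet
  rw [map_list_prod, List.map_map]
  have hmap : (kPsi hpq) ∘ (kGen n) = kf p q := by
    funext k
    exact PresentedMonoid.lift_of _ _
  rw [hmap]
  have hpw : ((Y.sort (· ≤ ·)).reverse).Pairwise (fun a b => b < a) :=
    List.pairwise_reverse.mpr (Y.sortedLT_sort.pairwise)
  rw [kf_prod hpq _ hpw]
  simp [List.mem_reverse, Finset.mem_sort]

/-- If an endomorphism of `K_n` sends each generator `a_i` to `e_{X_i}`, then the tuple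
`(X_1, ..., X_n)` is monotone. -/
theorem endo_mono (n : ℕ) (φ : Kiselman n →* Kiselman n) (X : Fin n → Finset (Fin n))
    (h : ∀ i : Fin n, φ (kGen n i) = eSet n (X i)) : Mono n X := by
  intro i j hij x hx y hy
  simp only [Finset.mem_sdiff] at hx hy
  by_contra hxy
  have hne : x ≠ y := fun e => hy.2 (e ▸ hx.1)
  have hlt : x < y := lt_of_le_of_ne (not_lt.1 hxy) hne
  -- the defining relation a_i a_j a_i = a_j a_i
  have hrel : (kGen n i * kGen n j * kGen n i : Kiselman n) = kGen n j * kGen n i :=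
    Quotient.sound (ConGen.Rel.of _ _ (Or.inr (Or.inl ⟨i, j, hij, rfl, rfl⟩)))
  apply_fun φ at hrel
  rw [map_mul, map_mul, map_mul, h i, h j] at hrel
  apply_fun kPsi hlt at hrel
  rw [map_mul, map_mul, map_mul, kPsi_eSet hlt (X i), kPsi_eSet hlt (X j)] at hrel
  rw [if_pos hy.1, if_neg hx.2, if_neg hy.2, if_pos hx.1] at hrel
  rw [mul_one, one_mul] at hrel
  rw [kBAB] at hrel
  exact kABne hrel.symm
end

section
/- Two endomorphisms of Kiselman's semigroup K_n that have equal content on all generators (i.e., c(φ(a_i)) = c(ψ(a_i)) for all i) are equal. -/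
/-- The monoid of subsets of `{1,...,n}` under union. -/
def UnionMonoid (n : ℕ) := Finset (Fin n)

instance (n : ℕ) : Monoid (UnionMonoid n) where
  mul X Y := (X ∪ Y : Finset (Fin n))
  one := (∅ : Finset (Fin n))
  mul_assoc := Finset.union_assoc
  one_mul := Finset.empty_union
  mul_one := Finset.union_empty

/-- Identify a finset with an element of the union monoid. -/
def toU (n : ℕ) : Finset (Fin n) → UnionMonoid n := id

theorem unionMonoid_mul_def (n : ℕ) (X Y : UnionMonoid n) :
    X * Y = (X ∪ Y : Finset (Fin n)) := rfl

/-- The content homomorphism `c : K_n → (2^{1,...,n}, ∪)`, with `c(a_i) = {i}`. -/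
noncomputable def content (n : ℕ) : Kiselman n →* UnionMonoid n :=
  PresentedMonoid.lift (fun i => toU n {i}) (by
    rintro a b (⟨i, rfl, rfl⟩ | ⟨i, j, hij, rfl, rfl⟩ | ⟨i, j, hij, rfl, rfl⟩) <;>
    · simp only [map_mul, FreeMonoid.lift_eval_of, unionMonoid_mul_def, toU, id]
      show (_ : Finset (Fin n)) = _
      ext x
      repeat erw [FreeMonoid.lift_eval_of]
      repeat erw [unionMonoid_mul_def]
      simp only [Finset.mem_union, Finset.mem_singleton]
      tauto)

theorem content_gen (n : ℕ) (i : Fin n) :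
    content n (kGen n i) = toU n {i} :=
  PresentedMonoid.lift_of _ _

namespace KisAux

variable {n : ℕ}

theorem ksound {a b : FreeMonoid (Fin n)} (h : kiselmanRel n a b) :
    PresentedMonoid.mk (kiselmanRel n) a = PresentedMonoid.mk (kiselmanRel n) b :=
  Quotient.sound (ConGen.Rel.of a b h)

theorem rel_sq (i : Fin n) : kGen n i * kGen n i = kGen n i :=
  ksound (Or.inl ⟨i, rfl, rfl⟩)

theorem relA {i j : Fin n} (hij : i < j) :
    kGen n i * kGen n j * kGen n i = kGen n j * kGen n i :=
  ksound (Or.inr (Or.inl ⟨i, j, hij, rfl, rfl⟩))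

theorem relB {i j : Fin n} (hij : i < j) :
    kGen n j * kGen n i * kGen n j = kGen n j * kGen n i :=
  ksound (Or.inr (Or.inr ⟨i, j, hij, rfl, rfl⟩))

theorem rel_sq' (i : Fin n) (c : Kiselman n) :
    kGen n i * (kGen n i * c) = kGen n i * c := by
  rw [← mul_assoc, rel_sq]

theorem relA' {i j : Fin n} (hij : i < j) (c : Kiselman n) :
    kGen n i * (kGen n j * (kGen n i * c)) = kGen n j * (kGen n i * c) := by
  rw [← mul_assoc, ← mul_assoc, relA hij, mul_assoc]

theorem relB' {i j : Fin n} (hij : i < j) (c : Kiselman n) :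
    kGen n j * (kGen n i * (kGen n j * c)) = kGen n j * (kGen n i * c) := by
  rw [← mul_assoc, ← mul_assoc, relB hij, mul_assoc]

/-- product of a list of generators -/
def prodw (l : List (Fin n)) : Kiselman n := (l.map (kGen n)).prod

@[simp] theorem prodw_nil : prodw ([] : List (Fin n)) = 1 := rfl

@[simp] theorem prodw_cons (x : Fin n) (l : List (Fin n)) :
    prodw (x :: l) = kGen n x * prodw l := by
  simp [prodw]

@[simp] theorem prodw_append (l₁ l₂ : List (Fin n)) :
    prodw (l₁ ++ l₂) = prodw l₁ * prodw l₂ := by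
  simp [prodw]

@[simp] theorem prodw_singleton (x : Fin n) : prodw [x] = kGen n x := by
  simp [prodw]

theorem id1c {i : Fin n} (p : List (Fin n)) (hp : ∀ x ∈ p, i < x) (c : Kiselman n) :
    kGen n i * (prodw p * (kGen n i * c)) = prodw p * (kGen n i * c) := by
  induction p using List.reverseRecOn generalizing c with
  | nil => simp [rel_sq' i c]
  | append_singleton p x ih =>
    have hx : i < x := hp x (by simp)
    have hp' : ∀ y ∈ p, i < y := fun y hy => hp y (by simp [hy])
    have key : kGen n x * (kGen n i * c) = kGen n i * (kGen n x * (kGen n i * c)) :=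
      (relA' hx c).symm
    rw [prodw_append, prodw_singleton, mul_assoc, key, ih hp', ← key]

theorem id2c {j : Fin n} (u : List (Fin n)) (hu : ∀ x ∈ u, x < j) (c : Kiselman n) :
    kGen n j * (prodw u * (kGen n j * c)) = kGen n j * (prodw u * c) := by
  induction u generalizing c with
  | nil => simp [rel_sq' j c]
  | cons x u ih =>
    have hx : x < j := hu x (by simp)
    have hu' : ∀ y ∈ u, y < j := fun y hy => hu y (by simp [hy])
    rw [prodw_cons, mul_assoc, ← relB' hx (prodw u * (kGen n j * c)),
        ih hu' c, relB' hx (prodw u * c)]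
    simp [mul_assoc]

/-! ### sorted list decompositions -/

theorem split_sort (X : Finset (Fin n)) (i : Fin n) (hi : i ∈ X) :
    ∃ s₁ s₂ : List (Fin n), X.sort (· ≤ ·) = s₁ ++ i :: s₂ ∧
      (∀ x ∈ s₁, x < i) ∧ (∀ x ∈ s₂, i < x) := by
  have hmem : i ∈ X.sort (· ≤ ·) := (Finset.mem_sort _).2 hi
  obtain ⟨s₁, s₂, hsplit⟩ := List.append_of_mem hmem
  have hsort : List.Pairwise (· < ·) (X.sort (· ≤ ·)) := (Finset.sortedLT_sort X).pairwise
  rw [hsplit, List.pairwise_append] at hsort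
  refine ⟨s₁, s₂, hsplit, fun x hx => hsort.2.2 x hx i (by simp), fun x hx => ?_⟩
  exact (List.pairwise_cons.1 hsort.2.1).1 x hx

theorem sort_max_decomp (X : Finset (Fin n)) (h : X.Nonempty) :
    X.sort (· ≤ ·) = (X.erase (X.max' h)).sort (· ≤ ·) ++ [X.max' h] := by
  set M := X.max' h with hM
  have hperm : ((X.erase M).sort (· ≤ ·) ++ [M]).Perm (X.sort (· ≤ ·)) := by
    refine (List.perm_append_singleton _ _).trans ?_
    refine (List.Perm.cons M (Finset.sort_perm_toList _ _)).trans ?_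
    refine (Finset.toList_insert (Finset.notMem_erase _ _)).symm.trans ?_
    rw [Finset.insert_erase (X.max'_mem h)]
    exact (Finset.sort_perm_toList _ _).symm
  refine (List.Perm.eq_of_pairwise' ?_ (Finset.pairwise_sort _ _) hperm).symm
  rw [List.pairwise_append]
  refine ⟨Finset.pairwise_sort _ _, by simp, ?_⟩
  intro x hx y hy
  simp only [List.mem_singleton] at hy; subst hy
  exact Finset.le_max' _ _ (Finset.mem_of_mem_erase ((Finset.mem_sort _).1 hx))

theorem sort_min_decomp (X : Finset (Fin n)) (h : X.Nonempty) :
    X.sort (· ≤ ·) = X.min' h :: (X.erase (X.min' h)).sort (· ≤ ·) := by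
  set b := X.min' h with hb
  have hperm : (b :: (X.erase b).sort (· ≤ ·)).Perm (X.sort (· ≤ ·)) := by
    refine (List.Perm.cons b (Finset.sort_perm_toList _ _)).trans ?_
    refine (Finset.toList_insert (Finset.notMem_erase _ _)).symm.trans ?_
    rw [Finset.insert_erase (X.min'_mem h)]
    exact (Finset.sort_perm_toList _ _).symm
  refine (List.Perm.eq_of_pairwise' ?_ (Finset.pairwise_sort _ _) hperm).symm
  rw [List.pairwise_cons]
  refine ⟨?_, Finset.pairwise_sort _ _⟩
  intro x hx
  exact Finset.min'_le _ _ (Finset.mem_of_mem_erase ((Finset.mem_sort _).1 hx))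

/-- the decreasing word of a finset -/
def decList (X : Finset (Fin n)) : List (Fin n) := (X.sort (· ≤ ·)).reverse

theorem eSet_eq_prodw (X : Finset (Fin n)) : eSet n X = prodw (decList X) := rfl

theorem decList_max (X : Finset (Fin n)) (h : X.Nonempty) :
    decList X = X.max' h :: decList (X.erase (X.max' h)) := by
  unfold decList
  rw [sort_max_decomp X h]
  simp

theorem decList_min (X : Finset (Fin n)) (h : X.Nonempty) :
    decList X = decList (X.erase (X.min' h)) ++ [X.min' h] := by
  unfold decList
  rw [sort_min_decomp X h]
  simp

/-! ### absorption into `eSet` -/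

theorem absDecL {i : Fin n} {X : Finset (Fin n)} (hi : i ∈ X) (c : Kiselman n) :
    kGen n i * (eSet n X * c) = eSet n X * c := by
  obtain ⟨s₁, s₂, hsp, h₁, h₂⟩ := split_sort X i hi
  have hE : eSet n X * c = prodw s₂.reverse * (kGen n i * (prodw s₁.reverse * c)) := by
    rw [eSet_eq_prodw, decList, hsp]
    simp [mul_assoc]
  rw [hE]
  exact id1c s₂.reverse (fun x hx => h₂ x (List.mem_reverse.1 hx)) _

theorem absDecR {i : Fin n} {X : Finset (Fin n)} (hi : i ∈ X) :
    eSet n X * kGen n i = eSet n X := by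
  obtain ⟨s₁, s₂, hsp, h₁, h₂⟩ := split_sort X i hi
  have hE : ∀ c : Kiselman n,
      eSet n X * c = prodw s₂.reverse * (kGen n i * (prodw s₁.reverse * c)) := by
    intro c
    rw [eSet_eq_prodw, decList, hsp]
    simp [mul_assoc]
  have h := id2c (j := i) s₁.reverse (fun x hx => h₁ x (List.mem_reverse.1 hx)) 1
  calc eSet n X * kGen n i
      = prodw s₂.reverse * (kGen n i * (prodw s₁.reverse * (kGen n i * 1))) := by
        rw [mul_one]; exact hE _
    _ = prodw s₂.reverse * (kGen n i * (prodw s₁.reverse * 1)) := by rw [h]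
    _ = eSet n X := by rw [← hE 1, mul_one]

theorem absListL {X : Finset (Fin n)} (r : List (Fin n)) (hr : ∀ x ∈ r, x ∈ X)
    (c : Kiselman n) : prodw r * (eSet n X * c) = eSet n X * c := by
  induction r with
  | nil => simp
  | cons x r ih =>
    rw [prodw_cons, mul_assoc, ih (fun y hy => hr y (by simp [hy]))]
    exact absDecL (hr x (by simp)) c

theorem absListR {X : Finset (Fin n)} (u : List (Fin n)) (hu : ∀ x ∈ u, x ∈ X) :
    eSet n X * prodw u = eSet n X := by
  induction u with
  | nil => simp
  | cons x u ih =>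
    rw [prodw_cons, ← mul_assoc, absDecR (hu x (by simp))]
    exact ih (fun y hy => hu y (by simp [hy]))

/-! ### content of word products -/

theorem content_prodw (l : List (Fin n)) :
    content n (prodw l) = toU n l.toFinset := by
  induction l with
  | nil => rw [prodw_nil, map_one]; rfl
  | cons x l ih =>
    rw [prodw_cons, map_mul, content_gen, ih, unionMonoid_mul_def]
    show (({x} : Finset (Fin n)) ∪ l.toFinset) = toU n (x :: l).toFinset
    rw [List.toFinset_cons, Finset.insert_eq]; rfl

theorem exists_list (e : Kiselman n) : ∃ l : List (Fin n), e = prodw l := by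
  induction e using PresentedMonoid.inductionOn with
  | h a =>
    refine ⟨a.toList, ?_⟩
    induction a using FreeMonoid.recOn with
    | one => rfl
    | of_mul x xs ih =>
      have : PresentedMonoid.mk (kiselmanRel n) (FreeMonoid.of x * xs)
          = kGen n x * PresentedMonoid.mk (kiselmanRel n) xs := rfl
      rw [this, ih]
      simp [FreeMonoid.toList_of_mul]

/-! ### extraction of the extremal letter -/

theorem oneMax (M : Fin n) (l : List (Fin n)) (hle : ∀ x ∈ l, x ≤ M) (hmem : M ∈ l) :
    ∃ r u : List (Fin n), (∀ x ∈ r, x < M) ∧ (∀ x ∈ u, x < M) ∧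
      prodw l = prodw r * (kGen n M * prodw u) := by
  induction l with
  | nil => cases hmem
  | cons x l ih =>
    have hle' : ∀ y ∈ l, y ≤ M := fun y hy => hle y (by simp [hy])
    by_cases hx : x = M
    · subst hx
      by_cases hm : x ∈ l
      · obtain ⟨r, u, hr, hu, he⟩ := ih hle' hm
        refine ⟨[], r ++ u, by simp, ?_, ?_⟩
        · intro y hy
          rcases List.mem_append.1 hy with h | h
          exacts [hr y h, hu y h]
        · rw [prodw_cons, he, id2c r hr (prodw u)]
          simp [mul_assoc]
      · refine ⟨[], l, by simp, ?_, by simp [prodw_cons]⟩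
        intro y hy
        exact lt_of_le_of_ne (hle' y hy) (fun hy' => hm (hy' ▸ hy))
    · have hm : M ∈ l := by
        rcases List.mem_cons.1 hmem with h | h
        · exact absurd h.symm hx
        · exact h
      obtain ⟨r, u, hr, hu, he⟩ := ih hle' hm
      refine ⟨x :: r, u, ?_, hu, ?_⟩
      · intro y hy
        rcases List.mem_cons.1 hy with h | h
        · subst h; exact lt_of_le_of_ne (hle y (by simp)) hx
        · exact hr y h
      · rw [prodw_cons, he, prodw_cons, mul_assoc]

theorem oneMin (b : Fin n) (l : List (Fin n)) (hle : ∀ x ∈ l, b ≤ x) (hmem : b ∈ l) :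
    ∃ r u : List (Fin n), (∀ x ∈ r, b < x) ∧ (∀ x ∈ u, b < x) ∧
      prodw l = prodw r * (kGen n b * prodw u) := by
  induction l with
  | nil => cases hmem
  | cons x l ih =>
    have hle' : ∀ y ∈ l, b ≤ y := fun y hy => hle y (by simp [hy])
    by_cases hx : x = b
    · subst hx
      by_cases hm : x ∈ l
      · obtain ⟨r, u, hr, hu, he⟩ := ih hle' hm
        refine ⟨r, u, hr, hu, ?_⟩
        rw [prodw_cons, he, id1c r hr (prodw u)]
      · refine ⟨[], l, by simp, ?_, by simp [prodw_cons]⟩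
        intro y hy
        exact lt_of_le_of_ne (hle' y hy) (fun hy' => hm (hy' ▸ hy))
    · have hm : b ∈ l := by
        rcases List.mem_cons.1 hmem with h | h
        · exact absurd h.symm hx
        · exact h
      obtain ⟨r, u, hr, hu, he⟩ := ih hle' hm
      refine ⟨x :: r, u, ?_, hu, ?_⟩
      · intro y hy
        rcases List.mem_cons.1 hy with h | h
        · subst h; exact lt_of_le_of_ne (hle y (by simp)) (Ne.symm hx)
        · exact hr y h
      · rw [prodw_cons, he, prodw_cons, mul_assoc]

/-! ### power juggling -/

theorem pow_shift {M : Type*} [Monoid M] (x y : M) (k : ℕ) :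
    (x * y) ^ (k + 1) = x * ((y * x) ^ k * y) := by
  induction k with
  | zero => simp
  | succ k ih => rw [pow_succ, ih]; simp [pow_succ, mul_assoc]

theorem gApow {M₀ : Fin n} (v : List (Fin n)) (hv : ∀ x ∈ v, x < M₀) :
    ∀ (k : ℕ) (d : Kiselman n),
      (kGen n M₀ * prodw v) ^ k * (kGen n M₀ * d) = kGen n M₀ * (prodw v ^ k * d) := by
  intro k
  induction k with
  | zero => intro d; simp
  | succ k ih =>
    intro d
    rw [pow_succ', mul_assoc, ih d, mul_assoc, id2c v hv (prodw v ^ k * d), pow_succ']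
    simp [mul_assoc]

theorem Bgpow {b : Fin n} (v : List (Fin n)) (hv : ∀ x ∈ v, b < x) :
    ∀ (k : ℕ) (d : Kiselman n),
      kGen n b * ((prodw v * kGen n b) ^ k * d) = prodw v ^ k * (kGen n b * d) := by
  intro k
  induction k with
  | zero => intro d; simp
  | succ k ih =>
    intro d
    rw [pow_succ', mul_assoc, mul_assoc, id1c v hv ((prodw v * kGen n b) ^ k * d),
        ih d, pow_succ']
    simp [mul_assoc]

theorem idem_pow {e : Kiselman n} (he : e * e = e) : ∀ k : ℕ, e ^ (k + 1) = e := by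
  intro k
  induction k with
  | zero => simp
  | succ k ih => rw [pow_succ, ih, he]

end KisAux

namespace KisAux

variable {n : ℕ}

theorem eSet_max_decomp (X : Finset (Fin n)) (h : X.Nonempty) :
    eSet n X = kGen n (X.max' h) * eSet n (X.erase (X.max' h)) := by
  rw [eSet_eq_prodw, decList_max X h, prodw_cons, ← eSet_eq_prodw]

theorem eSet_min_decomp (X : Finset (Fin n)) (h : X.Nonempty) :
    eSet n X = eSet n (X.erase (X.min' h)) * kGen n (X.min' h) := by
  rw [eSet_eq_prodw, decList_min X h, prodw_append, prodw_singleton, ← eSet_eq_prodw]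

theorem content_he {l r u : List (Fin n)} {M : Fin n}
    (he : prodw l = prodw r * (kGen n M * prodw u)) :
    l.toFinset = r.toFinset ∪ ({M} ∪ u.toFinset) := by
  have h1 := congrArg (content n) he
  rw [content_prodw, map_mul, map_mul, content_gen, content_prodw, content_prodw,
      unionMonoid_mul_def, unionMonoid_mul_def] at h1
  exact h1

theorem erase_eq_ur {l r u : List (Fin n)} {M : Fin n}
    (hc : l.toFinset = r.toFinset ∪ ({M} ∪ u.toFinset))
    (hr : ∀ x ∈ r, x ≠ M) (hu : ∀ x ∈ u, x ≠ M) :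
    (u ++ r).toFinset = l.toFinset.erase M := by
  ext y
  simp only [List.toFinset_append, Finset.mem_union, Finset.mem_erase, hc,
    Finset.mem_singleton, List.mem_toFinset]
  constructor
  · rintro (hy | hy)
    · exact ⟨hu y hy, Or.inr (Or.inr hy)⟩
    · exact ⟨hr y hy, Or.inl hy⟩
  · rintro ⟨hne, (hy | hy | hy)⟩
    · exact Or.inr hy
    · exact absurd hy hne
    · exact Or.inl hy

theorem mainL (X : Finset (Fin n)) : ∀ l : List (Fin n), l.toFinset = X → X.Nonempty →
    ∃ t, (prodw l) ^ X.card = eSet n X * t := by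
  induction X using Finset.strongInduction with
  | _ X ih =>
    intro l hlX hX
    obtain ⟨M, hM⟩ : ∃ m, m = X.max' hX := ⟨_, rfl⟩
    have hle : ∀ x ∈ l, x ≤ M := fun x hx =>
      hM ▸ Finset.le_max' _ _ (hlX ▸ List.mem_toFinset.2 hx)
    have hmem : M ∈ l := by
      have hm : M ∈ l.toFinset := by rw [hlX, hM]; exact X.max'_mem hX
      exact List.mem_toFinset.1 hm
    obtain ⟨r, u, hr, hu, he⟩ := oneMax M l hle hmem
    have hc := content_he he
    have hY : (u ++ r).toFinset = X.erase M := by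
      rw [← hlX]
      exact erase_eq_ur hc (fun x hx => (hr x hx).ne) (fun x hx => (hu x hx).ne)
    have hMX : M ∈ X := by rw [hM]; exact X.max'_mem hX
    have hpos : 0 < X.card := Finset.card_pos.2 hX
    have hcard : X.card = (X.erase M).card + 1 := by
      rw [Finset.card_erase_of_mem hMX]
      omega
    have hluM : ∀ x ∈ u ++ r, x < M := by
      intro x hx
      rcases List.mem_append.1 hx with h | h
      exacts [hu x h, hr x h]
    have hgE : kGen n M * eSet n (X.erase M) = eSet n X := by
      rw [eSet_max_decomp X hX, ← hM]
    have hpow : (prodw l) ^ X.card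
        = prodw r * (kGen n M * (prodw (u ++ r) ^ (X.erase M).card * prodw u)) := by
      rw [he, hcard, pow_shift]
      have h1 : kGen n M * prodw u * prodw r = kGen n M * prodw (u ++ r) := by
        rw [prodw_append, mul_assoc]
      rw [h1, gApow (u ++ r) hluM _ (prodw u)]
    have hrX : ∀ x ∈ r, x ∈ X := by
      intro x hx
      rw [← hlX, hc]
      simp [hx]
    by_cases hYne : (X.erase M).Nonempty
    · obtain ⟨t₀, ht₀⟩ := ih (X.erase M) (Finset.erase_ssubset hMX) (u ++ r) hY hYne
      refine ⟨t₀ * prodw u, ?_⟩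
      rw [hpow, ht₀]
      calc prodw r * (kGen n M * (eSet n (X.erase M) * t₀ * prodw u))
          = prodw r * (eSet n X * (t₀ * prodw u)) := by
            rw [← hgE]; simp [mul_assoc]
        _ = eSet n X * (t₀ * prodw u) := absListL r hrX _
    · have hY0 : X.erase M = ∅ := Finset.not_nonempty_iff_eq_empty.1 hYne
      have hur : u ++ r = [] := by
        have h0 : (u ++ r).toFinset = ∅ := by rw [hY, hY0]
        exact List.toFinset_eq_empty_iff _ |>.1 h0
      have hu0 : u = [] := by simpa using (List.append_eq_nil_iff.1 hur).1
      have hr0 : r = [] := by simpa using (List.append_eq_nil_iff.1 hur).2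
      refine ⟨1, ?_⟩
      have hE1 : eSet n X = kGen n M * 1 := by
        rw [← hgE, hY0, eSet_eq_prodw]
        simp [decList]
      rw [hpow, hu0, hr0, hE1]
      simp

theorem mainR (X : Finset (Fin n)) : ∀ l : List (Fin n), l.toFinset = X → X.Nonempty →
    ∃ t, (prodw l) ^ X.card = t * eSet n X := by
  induction X using Finset.strongInduction with
  | _ X ih =>
    intro l hlX hX
    obtain ⟨b, hb⟩ : ∃ m, m = X.min' hX := ⟨_, rfl⟩
    have hle : ∀ x ∈ l, b ≤ x := fun x hx =>
      hb ▸ Finset.min'_le _ _ (hlX ▸ List.mem_toFinset.2 hx)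
    have hmem : b ∈ l := by
      have hm : b ∈ l.toFinset := by rw [hlX, hb]; exact X.min'_mem hX
      exact List.mem_toFinset.1 hm
    obtain ⟨r, u, hr, hu, he⟩ := oneMin b l hle hmem
    have hc := content_he he
    have hY : (u ++ r).toFinset = X.erase b := by
      rw [← hlX]
      exact erase_eq_ur hc (fun x hx => (hr x hx).ne') (fun x hx => (hu x hx).ne')
    have hbX : b ∈ X := by rw [hb]; exact X.min'_mem hX
    have hpos : 0 < X.card := Finset.card_pos.2 hX
    have hcard : X.card = (X.erase b).card + 1 := by
      rw [Finset.card_erase_of_mem hbX]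
      omega
    have hlub : ∀ x ∈ u ++ r, b < x := by
      intro x hx
      rcases List.mem_append.1 hx with h | h
      exacts [hu x h, hr x h]
    have hgE : eSet n (X.erase b) * kGen n b = eSet n X := by
      rw [eSet_min_decomp X hX, ← hb]
    have hpow : (prodw l) ^ X.card
        = prodw r * (prodw (u ++ r) ^ (X.erase b).card * (kGen n b * prodw u)) := by
      rw [he, hcard, ← mul_assoc, pow_shift (prodw r * kGen n b) (prodw u)]
      have h1 : prodw u * (prodw r * kGen n b) = prodw (u ++ r) * kGen n b := by
        rw [prodw_append, mul_assoc]
      rw [h1, mul_assoc, Bgpow (u ++ r) hlub _ (prodw u)]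
    have huX : ∀ x ∈ u, x ∈ X := by
      intro x hx
      rw [← hlX, hc]
      simp [hx]
    by_cases hYne : (X.erase b).Nonempty
    · obtain ⟨t₀, ht₀⟩ := ih (X.erase b) (Finset.erase_ssubset hbX) (u ++ r) hY hYne
      refine ⟨prodw r * t₀, ?_⟩
      rw [hpow, ht₀]
      calc prodw r * (t₀ * eSet n (X.erase b) * (kGen n b * prodw u))
          = prodw r * (t₀ * (eSet n X * prodw u)) := by
            rw [← hgE]; simp [mul_assoc]
        _ = prodw r * (t₀ * eSet n X) := by rw [absListR u huX]
        _ = prodw r * t₀ * eSet n X := by rw [mul_assoc]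
    · have hY0 : X.erase b = ∅ := Finset.not_nonempty_iff_eq_empty.1 hYne
      have hur : u ++ r = [] := by
        have h0 : (u ++ r).toFinset = ∅ := by rw [hY, hY0]
        exact List.toFinset_eq_empty_iff _ |>.1 h0
      have hu0 : u = [] := by simpa using (List.append_eq_nil_iff.1 hur).1
      have hr0 : r = [] := by simpa using (List.append_eq_nil_iff.1 hur).2
      refine ⟨1, ?_⟩
      have hE1 : eSet n X = 1 * kGen n b := by
        rw [← hgE, hY0, eSet_eq_prodw]
        simp [decList]
      rw [hpow, hu0, hr0, hE1]
      simp

theorem genAbsorbL {l : List (Fin n)} (he : prodw l * prodw l = prodw l)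
    {i : Fin n} (hi : i ∈ l.toFinset) : kGen n i * prodw l = prodw l := by
  have hX : l.toFinset.Nonempty := ⟨i, hi⟩
  obtain ⟨k, hk⟩ : ∃ k, l.toFinset.card = k + 1 :=
    ⟨_, (Nat.succ_pred_eq_of_pos (Finset.card_pos.2 hX)).symm⟩
  obtain ⟨t, ht⟩ := mainL l.toFinset l rfl hX
  have hp : (prodw l) ^ l.toFinset.card = prodw l := by rw [hk]; exact idem_pow he k
  calc kGen n i * prodw l = kGen n i * (eSet n l.toFinset * t) := by rw [← hp, ht]
    _ = eSet n l.toFinset * t := absDecL hi t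
    _ = prodw l := by rw [← ht, hp]

theorem genAbsorbR {l : List (Fin n)} (he : prodw l * prodw l = prodw l)
    {i : Fin n} (hi : i ∈ l.toFinset) : prodw l * kGen n i = prodw l := by
  have hX : l.toFinset.Nonempty := ⟨i, hi⟩
  obtain ⟨k, hk⟩ : ∃ k, l.toFinset.card = k + 1 :=
    ⟨_, (Nat.succ_pred_eq_of_pos (Finset.card_pos.2 hX)).symm⟩
  obtain ⟨t, ht⟩ := mainR l.toFinset l rfl hX
  have hp : (prodw l) ^ l.toFinset.card = prodw l := by rw [hk]; exact idem_pow he k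
  calc prodw l * kGen n i = t * eSet n l.toFinset * kGen n i := by rw [← hp, ht]
    _ = t * (eSet n l.toFinset * kGen n i) := by rw [mul_assoc]
    _ = t * eSet n l.toFinset := by rw [absDecR hi]
    _ = prodw l := by rw [← ht, hp]

theorem absorbL {l : List (Fin n)} (he : prodw l * prodw l = prodw l)
    (u : List (Fin n)) (hu : ∀ x ∈ u, x ∈ l.toFinset) :
    prodw u * prodw l = prodw l := by
  induction u with
  | nil => simp
  | cons x u ih =>
    rw [prodw_cons, mul_assoc, ih (fun y hy => hu y (by simp [hy]))]
    exact genAbsorbL he (hu x (by simp))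

theorem absorbR {l : List (Fin n)} (he : prodw l * prodw l = prodw l)
    (u : List (Fin n)) (hu : ∀ x ∈ u, x ∈ l.toFinset) :
    prodw l * prodw u = prodw l := by
  induction u with
  | nil => simp
  | cons x u ih =>
    rw [prodw_cons, ← mul_assoc, genAbsorbR he (hu x (by simp))]
    exact ih (fun y hy => hu y (by simp [hy]))

theorem pairEq (e f : Kiselman n) (he : e * e = e) (hf : f * f = f)
    (hc : content n e = content n f) : e = f := by
  obtain ⟨le, hle⟩ := exists_list e
  obtain ⟨lf, hlf⟩ := exists_list f
  subst hle hlf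
  have hsets : le.toFinset = lf.toFinset := by
    rw [content_prodw, content_prodw] at hc
    exact hc
  have h1 : prodw lf * prodw le = prodw le :=
    absorbL he lf (fun x hx => by rw [hsets]; exact List.mem_toFinset.2 hx)
  have h2 : prodw lf * prodw le = prodw lf :=
    absorbR hf le (fun x hx => by rw [← hsets]; exact List.mem_toFinset.2 hx)
  exact h1.symm.trans h2

end KisAux

/-- Two endomorphisms of `K_n` agreeing in content on all generators are equal. -/
theorem endo_eq_of_content_eq (n : ℕ) (φ ψ : Kiselman n →* Kiselman n)
    (h : ∀ i : Fin n, content n (φ (kGen n i)) = content n (ψ (kGen n i))) :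
    φ = ψ := by
  apply PresentedMonoid.ext
  intro i
  show φ (kGen n i) = ψ (kGen n i)
  apply KisAux.pairEq
  · rw [← map_mul, KisAux.rel_sq]
  · rw [← map_mul, KisAux.rel_sq]
  · exact h i
end

section
/- The set D_n of n×n boolean matrices avoiding the 2×2 pattern [[0,1],[1,0]] (i.e., there are no indices x, y and columns i < j with M_{xj}=1, M_{xi}=0, M_{yj}=0, M_{yi}=1 and x ≤ y) is closed under boolean matrix multiplication and contains the identity matrix, hence is a submonoid of boolean matrices. -/
/-- An `m × n` boolean matrix avoids the pattern `[[0,1],[1,0]]` if whenever columns `i < j`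
contain the pattern in rows `x`, `y`, we have `x > y`. -/
def Avoids (m n : ℕ) (M : Fin m → Fin n → Bool) : Prop :=
  ∀ i j : Fin n, i < j → ∀ x y : Fin m,
    M x j = true → M x i = false → M y j = false → M y i = true → y < x

/-- Boolean matrix multiplication. -/
def bmul (n : ℕ) (A B : Fin n → Fin n → Bool) : Fin n → Fin n → Bool :=
  fun i j => decide (∃ k, A i k = true ∧ B k j = true)

/-- The boolean identity matrix. -/
def idMat (n : ℕ) : Fin n → Fin n → Bool := fun i j => decide (i = j)

/-- The set of boolean matrices avoiding the pattern `[[0,1],[1,0]]` contains the identity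
matrix and is closed under boolean matrix multiplication. -/
theorem avoids_submonoid (n : ℕ) :
    Avoids n n (idMat n) ∧
    (∀ A B : Fin n → Fin n → Bool, Avoids n n A → Avoids n n B → Avoids n n (bmul n A B)) := by
  constructor
  · intro i j hij x y hxj hxi hyj hyi
    simp only [idMat, decide_eq_true_eq] at hxj hyi
    subst hxj; subst hyi
    exact hij
  · intro A B hA hB i j hij x y hxj hxi hyj hyi
    simp only [bmul, decide_eq_true_eq, decide_eq_false_iff_not, not_exists, not_and] at hxj hxi hyj hyi
    obtain ⟨k, hAxk, hBkj⟩ := hxj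
    obtain ⟨l, hAyl, hBli⟩ := hyi
    -- A x l = false
    have hAxl : A x l = false := by
      by_contra h
      exact hxi l (Bool.of_not_eq_false h) hBli
    -- B l j = false
    have hBlj : B l j = false := by
      by_contra h
      exact hyj l hAyl (Bool.of_not_eq_false h)
    -- B k i = false
    have hBki : B k i = false := by
      by_contra h
      exact hxi k hAxk (Bool.of_not_eq_false h)
    -- A y k = false
    have hAyk : A y k = false := by
      by_contra h
      exact hyj k (Bool.of_not_eq_false h) hBkj
    have hlk : l < k := hB i j hij k l hBkj hBki hBlj hBli
    exact hA l k hlk x y hAxk hAxl hAyk hAyl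
end

section
/- The number of 2×n boolean matrices avoiding the 2×2 pattern [[0,1],[1,0]] equals (3+n)·3^{n-1} for all n ≥ 1. -/
instance (m n : ℕ) (M : Fin m → Fin n → Bool) : Decidable (Avoids m n M) :=
  inferInstanceAs (Decidable (∀ i j : Fin n, i < j → ∀ x y : Fin m,
    M x j = true → M x i = false → M y j = false → M y i = true → y < x))

/-- No column equal to (false, true)ᵀ. -/
def NoB (n : ℕ) (N : Fin 2 → Fin n → Bool) : Prop :=
  ∀ i : Fin n, ¬(N 0 i = false ∧ N 1 i = true)

instance (n : ℕ) (N : Fin 2 → Fin n → Bool) : Decidable (NoB n N) :=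
  inferInstanceAs (Decidable (∀ i : Fin n, ¬(N 0 i = false ∧ N 1 i = true)))

lemma noB_avoids {n : ℕ} {N : Fin 2 → Fin n → Bool} (h : NoB n N) : Avoids 2 n N := by
  intro i j hij x y h1 h2 h3 h4
  fin_cases x <;> fin_cases y <;> simp_all
  exact h i ⟨h2, h4⟩

lemma card_noB (n : ℕ) :
    Fintype.card {N : Fin 2 → Fin n → Bool // NoB n N} = 3 ^ n := by
  have e1 : {N : Fin 2 → Fin n → Bool // NoB n N} ≃
      {f : Fin n → Fin 2 → Bool // ∀ i, ¬(f i 0 = false ∧ f i 1 = true)} :=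
    (Equiv.piComm fun (_ : Fin 2) (_ : Fin n) => Bool).subtypeEquiv fun N => Iff.rfl
  have e2 : {f : Fin n → Fin 2 → Bool // ∀ i, ¬(f i 0 = false ∧ f i 1 = true)} ≃
      ∀ _ : Fin n, {c : Fin 2 → Bool // ¬(c 0 = false ∧ c 1 = true)} :=
    Equiv.subtypePiEquivPi (p := fun (_ : Fin n) (c : Fin 2 → Bool) => ¬(c 0 = false ∧ c 1 = true))
  rw [Fintype.card_congr (e1.trans e2), Fintype.card_pi]
  have h3 : Fintype.card {c : Fin 2 → Bool // ¬(c 0 = false ∧ c 1 = true)} = 3 := by decide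
  rw [Finset.prod_congr rfl fun i _ => h3, Finset.prod_const, Finset.card_univ, Fintype.card_fin]

lemma avoids_snoc (n : ℕ) (N : Fin 2 → Fin n → Bool) (c : Fin 2 → Bool) :
    Avoids 2 (n + 1) (fun x => Fin.snoc (N x) (c x)) ↔
      Avoids 2 n N ∧ ((c 0 = true ∧ c 1 = false) → NoB n N) := by
  constructor
  · intro h
    refine ⟨?_, ?_⟩
    · intro i j hij x y h1 h2 h3 h4
      exact h i.castSucc j.castSucc (by simpa using hij) x y
        (by simpa [Fin.snoc_castSucc] using h1)
        (by simpa [Fin.snoc_castSucc] using h2)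
        (by simpa [Fin.snoc_castSucc] using h3)
        (by simpa [Fin.snoc_castSucc] using h4)
    · rintro ⟨hc0, hc1⟩ i ⟨hi0, hi1⟩
      have := h i.castSucc (Fin.last n) (Fin.castSucc_lt_last i) 0 1
        (by simpa [Fin.snoc_last] using hc0)
        (by simpa [Fin.snoc_castSucc] using hi0)
        (by simpa [Fin.snoc_last] using hc1)
        (by simpa [Fin.snoc_castSucc] using hi1)
      exact absurd this (by decide)
  · rintro ⟨hA, hB⟩ i j hij x y h1 h2 h3 h4
    cases i using Fin.lastCases with
    | last => exact absurd (lt_of_lt_of_le hij (Fin.le_last j)) (lt_irrefl _)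
    | cast i' =>
      cases j using Fin.lastCases with
      | last =>
        simp only [Fin.snoc_last, Fin.snoc_castSucc] at h1 h2 h3 h4
        have hxy : x ≠ y := by rintro rfl; rw [h1] at h3; exact absurd h3 (by simp)
        fin_cases x <;> fin_cases y
        · exact absurd rfl hxy
        · exact absurd ⟨h2, h4⟩ (hB ⟨h1, h3⟩ i')
        · decide
        · exact absurd rfl hxy
      | cast j' =>
        simp only [Fin.snoc_castSucc] at h1 h2 h3 h4
        exact hA i' j' (by simpa using hij) x y h1 h2 h3 h4

def sliceEquiv (n : ℕ) :
    (Fin 2 → Fin (n + 1) → Bool) ≃ ((Fin 2 → Fin n → Bool) × (Fin 2 → Bool)) where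
  toFun M := (fun x i => M x i.castSucc, fun x => M x (Fin.last n))
  invFun p := fun x => Fin.snoc (p.1 x) (p.2 x)
  left_inv M := funext fun x => Fin.snoc_init_self (M x)
  right_inv p := by
    ext x i
    · simp [Fin.snoc_castSucc]
    · simp [Fin.snoc_last]

lemma card_succ (n : ℕ) :
    Fintype.card {M : Fin 2 → Fin (n + 1) → Bool // Avoids 2 (n + 1) M} =
      3 * Fintype.card {N : Fin 2 → Fin n → Bool // Avoids 2 n N} + 3 ^ n := by
  set f := Fintype.card {N : Fin 2 → Fin n → Bool // Avoids 2 n N} with hf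
  have hiff : ∀ M : Fin 2 → Fin (n + 1) → Bool,
      Avoids 2 (n + 1) M ↔
        Avoids 2 n (sliceEquiv n M).1 ∧
          (((sliceEquiv n M).2 0 = true ∧ (sliceEquiv n M).2 1 = false) →
            NoB n (sliceEquiv n M).1) := by
    intro M
    have := avoids_snoc n (sliceEquiv n M).1 (sliceEquiv n M).2
    rwa [show (fun x => Fin.snoc ((sliceEquiv n M).1 x) ((sliceEquiv n M).2 x)) = M from
      funext fun x => Fin.snoc_init_self (M x)] at this
  have e2 : {M : Fin 2 → Fin (n + 1) → Bool // Avoids 2 (n + 1) M} ≃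
      {p : (Fin 2 → Fin n → Bool) × (Fin 2 → Bool) //
        Avoids 2 n p.1 ∧ ((p.2 0 = true ∧ p.2 1 = false) → NoB n p.1)} :=
    (sliceEquiv n).subtypeEquiv hiff
  have e3 : {p : (Fin 2 → Fin n → Bool) × (Fin 2 → Bool) //
        Avoids 2 n p.1 ∧ ((p.2 0 = true ∧ p.2 1 = false) → NoB n p.1)} ≃
      {q : (Fin 2 → Bool) × (Fin 2 → Fin n → Bool) //
        Avoids 2 n q.2 ∧ ((q.1 0 = true ∧ q.1 1 = false) → NoB n q.2)} :=
    (Equiv.prodComm _ _).subtypeEquiv (by intro p; rfl)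
  have e4 : {q : (Fin 2 → Bool) × (Fin 2 → Fin n → Bool) //
        Avoids 2 n q.2 ∧ ((q.1 0 = true ∧ q.1 1 = false) → NoB n q.2)} ≃
      Σ c : Fin 2 → Bool, {N : Fin 2 → Fin n → Bool //
        Avoids 2 n N ∧ ((c 0 = true ∧ c 1 = false) → NoB n N)} :=
    Equiv.subtypeProdEquivSigmaSubtype
      (fun (c : Fin 2 → Bool) (N : Fin 2 → Fin n → Bool) =>
        Avoids 2 n N ∧ ((c 0 = true ∧ c 1 = false) → NoB n N))
  rw [Fintype.card_congr ((e2.trans e3).trans e4), Fintype.card_sigma]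
  have key : ∀ c : Fin 2 → Bool,
      Fintype.card {N : Fin 2 → Fin n → Bool //
        Avoids 2 n N ∧ ((c 0 = true ∧ c 1 = false) → NoB n N)} =
      if (c 0 = true ∧ c 1 = false) then 3 ^ n else f := by
    intro c
    by_cases hc : c 0 = true ∧ c 1 = false
    · rw [if_pos hc, ← card_noB n]
      exact Fintype.card_congr (Equiv.subtypeEquivRight fun N => by
        constructor
        · rintro ⟨_, h2⟩; exact h2 hc
        · intro h; exact ⟨noB_avoids h, fun _ => h⟩)
    · rw [if_neg hc, hf]
      exact Fintype.card_congr (Equiv.subtypeEquivRight fun N => by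
        constructor
        · rintro ⟨h1, _⟩; exact h1
        · intro h; exact ⟨h, fun h' => absurd h' hc⟩)
  simp only [key]
  rw [Finset.sum_ite, Finset.sum_const, Finset.sum_const]
  have h1 : (Finset.univ.filter fun c : Fin 2 → Bool => c 0 = true ∧ c 1 = false).card = 1 := by
    decide
  have h2 : (Finset.univ.filter fun c : Fin 2 → Bool => ¬(c 0 = true ∧ c 1 = false)).card = 3 := by
    decide
  rw [h1, h2]
  ring

lemma card_formula (m : ℕ) :
    Fintype.card {M : Fin 2 → Fin (m + 1) → Bool // Avoids 2 (m + 1) M} =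
      (3 + (m + 1)) * 3 ^ m := by
  induction m with
  | zero => decide
  | succ k ih =>
    rw [card_succ (k + 1), ih]
    ring

/-- The number of `2 × n` boolean matrices avoiding the pattern `[[0,1],[1,0]]` is
`(3 + n) · 3^(n-1)` for `n ≥ 1`. -/
theorem card_avoids_two_rows (n : ℕ) (hn : 1 ≤ n) :
    Fintype.card {M : Fin 2 → Fin n → Bool // Avoids 2 n M} = (3 + n) * 3 ^ (n - 1) := by
  obtain ⟨m, rfl⟩ : ∃ m, n = m + 1 := ⟨n - 1, (Nat.succ_pred_eq_of_pos hn).symm⟩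
  simpa using card_formula m
end

section
/- In Kiselman's semigroup K_n, the idempotents e_X for X ranging over subsets of {1,...,n} are pairwise distinct; in particular K_n contains at least 2^n idempotents. -/
namespace KP
variable {n : ℕ}

abbrev mkK (n : ℕ) : FreeMonoid (Fin n) →* Kiselman n := PresentedMonoid.mk (kiselmanRel n)

lemma sound {w v : FreeMonoid (Fin n)} (h : kiselmanRel n w v) : mkK n w = mkK n v :=
  Quotient.sound (ConGen.Rel.of _ _ h)

lemma rel1 (i : Fin n) : kGen n i * kGen n i = kGen n i := by
  have := sound (Or.inl ⟨i, rfl, rfl⟩)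
  simp only [map_mul] at this
  exact this

lemma rel2 {i j : Fin n} (h : i < j) : kGen n i * kGen n j * kGen n i = kGen n j * kGen n i := by
  have := sound (n := n) (Or.inr (Or.inl ⟨i, j, h, rfl, rfl⟩))
  simp only [map_mul] at this
  exact this

lemma rel3 {i j : Fin n} (h : i < j) : kGen n j * kGen n i * kGen n j = kGen n j * kGen n i := by
  have := sound (n := n) (Or.inr (Or.inr ⟨i, j, h, rfl, rfl⟩))
  simp only [map_mul] at this
  exact this

def P (l : List (Fin n)) : Kiselman n := (l.map (kGen n)).prod

@[simp] lemma P_nil : P ([] : List (Fin n)) = 1 := rfl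
@[simp] lemma P_cons (i : Fin n) (l : List (Fin n)) : P (i :: l) = kGen n i * P l := by
  simp [P]
@[simp] lemma P_append (u v : List (Fin n)) : P (u ++ v) = P u * P v := by
  simp [P]

end KP

namespace KP
variable {n : ℕ}

lemma absorb_low (m : Fin n) (u : List (Fin n)) (hu : ∀ j ∈ u, m < j) :
    kGen n m * P u * kGen n m = P u * kGen n m := by
  induction u using List.reverseRecOn with
  | nil => simpa using rel1 m
  | append_singleton us j ih =>
    have hj : m < j := hu j (by simp)
    have ih' := ih (fun x hx => hu x (by simp [hx]))
    have h2 : kGen n m * kGen n j * kGen n m = kGen n j * kGen n m := rel2 hj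
    calc kGen n m * P (us ++ [j]) * kGen n m
        = kGen n m * P us * (kGen n j * kGen n m) := by
          simp [mul_assoc]
      _ = kGen n m * P us * (kGen n m * kGen n j * kGen n m) := by rw [h2]
      _ = (kGen n m * P us * kGen n m) * (kGen n j * kGen n m) := by
          simp [mul_assoc]
      _ = P us * kGen n m * (kGen n j * kGen n m) := by rw [ih']
      _ = P us * (kGen n m * kGen n j * kGen n m) := by simp [mul_assoc]
      _ = P us * (kGen n j * kGen n m) := by rw [h2]
      _ = P (us ++ [j]) * kGen n m := by simp [mul_assoc]

lemma absorb_high (M : Fin n) (u : List (Fin n)) (hu : ∀ j ∈ u, j < M) :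
    kGen n M * P u * kGen n M = kGen n M * P u := by
  induction u with
  | nil => simpa using rel1 M
  | cons i us ih =>
    have hi : i < M := hu i (by simp)
    have ih' := ih (fun x hx => hu x (by simp [hx]))
    have h3 : kGen n M * kGen n i * kGen n M = kGen n M * kGen n i := rel3 hi
    calc kGen n M * P (i :: us) * kGen n M
        = (kGen n M * kGen n i) * (P us * kGen n M) := by simp [mul_assoc]
      _ = (kGen n M * kGen n i * kGen n M) * (P us * kGen n M) := by rw [h3]
      _ = (kGen n M * kGen n i) * (kGen n M * P us * kGen n M) := by simp [mul_assoc]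
      _ = (kGen n M * kGen n i) * (kGen n M * P us) := by rw [ih']
      _ = (kGen n M * kGen n i * kGen n M) * P us := by simp [mul_assoc]
      _ = (kGen n M * kGen n i) * P us := by rw [h3]
      _ = kGen n M * P (i :: us) := by simp [mul_assoc]

lemma prod_idem (l : List (Fin n)) (hl : l.Pairwise (· > ·)) : P l * P l = P l := by
  induction l using List.reverseRecOn with
  | nil => simp
  | append_singleton ls m ih =>
    rw [List.pairwise_append] at hl
    obtain ⟨h1, _, h3⟩ := hl
    have habs := absorb_low m ls (fun j hj => h3 j hj m (by simp))
    have ih' := ih h1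
    calc P (ls ++ [m]) * P (ls ++ [m])
        = P ls * (kGen n m * P ls * kGen n m) := by simp [mul_assoc]
      _ = P ls * (P ls * kGen n m) := by rw [habs]
      _ = (P ls * P ls) * kGen n m := by simp [mul_assoc]
      _ = P ls * kGen n m := by rw [ih']
      _ = P (ls ++ [m]) := by simp

lemma eSet_eq_P (X : Finset (Fin n)) : eSet n X = P ((X.sort (· ≤ ·)).reverse) := rfl

lemma eSet_idem (X : Finset (Fin n)) : IsIdempotentElem (eSet n X) := by
  rw [IsIdempotentElem, eSet_eq_P]
  apply prod_idem
  rw [List.pairwise_reverse]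
  exact X.sortedLT_sort.pairwise

end KP

namespace KP
variable {n : ℕ}

structure Content (n : ℕ) where
  s : Finset (Fin n)

instance : CommMonoid (Content n) where
  mul a b := ⟨a.s ∪ b.s⟩
  one := ⟨∅⟩
  mul_assoc a b c := by simp [Finset.union_assoc, HMul.hMul, Mul.mul]
  one_mul a := by simp [HMul.hMul, Mul.mul, One.one, OfNat.ofNat]
  mul_one a := by simp [HMul.hMul, Mul.mul, One.one, OfNat.ofNat]
  mul_comm a b := by simp [HMul.hMul, Mul.mul, Finset.union_comm]

lemma content_mul (a b : Content n) : a * b = ⟨a.s ∪ b.s⟩ := rfl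

def content (n : ℕ) : Kiselman n →* Content n :=
  PresentedMonoid.lift (fun i => (⟨{i}⟩ : Content n)) (by
    intro a b hab
    rcases hab with ⟨i, rfl, rfl⟩ | ⟨i, j, hij, rfl, rfl⟩ | ⟨i, j, hij, rfl, rfl⟩ <;>
      · simp only [map_mul, FreeMonoid.lift_eval_of, content_mul, Content.mk.injEq]
        ext x
        simp
        try tauto)

@[simp] lemma content_kGen (i : Fin n) : content n (kGen n i) = (⟨{i}⟩ : Content n) := rfl

lemma content_P (l : List (Fin n)) : content n (P l) = (⟨l.toFinset⟩ : Content n) := by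
  induction l with
  | nil =>
    show (content n) 1 = _
    rw [map_one]
    rfl
  | cons i t ih =>
    rw [P_cons, map_mul, content_kGen, ih, content_mul, Content.mk.injEq]
    simp [Finset.insert_eq, -Finset.singleton_union]

lemma content_eSet (X : Finset (Fin n)) : content n (eSet n X) = (⟨X⟩ : Content n) := by
  rw [eSet_eq_P, content_P, Content.mk.injEq]
  simp

lemma eSet_inj : Function.Injective (eSet n) := by
  intro X Y h
  have := congrArg (content n) h
  rw [content_eSet, content_eSet, Content.mk.injEq] at this
  exact this

end KP

namespace KP
variable {n : ℕ}

def Bad (n : ℕ) (w : List (Fin n)) : Prop :=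
  ∃ (u v u' : List (Fin n)) (i : Fin n),
    w = u ++ i :: (v ++ i :: u') ∧ ((∀ j ∈ v, i < j) ∨ (∀ j ∈ v, j < i))

lemma Bad.append_left {w : List (Fin n)} (x : List (Fin n)) (h : Bad n w) : Bad n (x ++ w) := by
  obtain ⟨u, v, u', i, rfl, hv⟩ := h
  exact ⟨x ++ u, v, u', i, by simp, hv⟩

lemma Bad.cons {w : List (Fin n)} (a : Fin n) (h : Bad n w) : Bad n (a :: w) :=
  h.append_left [a]

lemma exists_first (k : Fin n) : ∀ t : List (Fin n), k ∈ t →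
    ∃ v s, t = v ++ k :: s ∧ k ∉ v := by
  intro t
  induction t with
  | nil => intro h; simp at h
  | cons a t ih =>
    intro h
    by_cases hak : a = k
    · exact ⟨[], t, by simp [hak], by simp⟩
    · have : k ∈ t := by
        rcases List.mem_cons.1 h with h1 | h1
        · exact absurd h1.symm hak
        · exact h1
      obtain ⟨v, s, rfl, hkv⟩ := ih this
      refine ⟨a :: v, s, by simp, ?_⟩
      simp only [List.mem_cons]
      rintro (h | h)
      · exact hak h.symm
      · exact hkv h

lemma count_le (k : Fin n) : ∀ (N : ℕ) (w : List (Fin n)), w.length ≤ N → ¬ Bad n w →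
    w.countP (fun j => decide (j = k)) ≤ w.countP (fun j => decide (k < j)) + 1 := by
  intro N
  induction N with
  | zero =>
    intro w hw _
    rw [List.length_eq_zero_iff.mp (Nat.le_zero.mp hw)]
    simp
  | succ N ih =>
    intro w hw hbad
    match w with
    | [] => simp
    | a :: t =>
      by_cases hak : a = k
      · subst hak
        by_cases hkt : a ∈ t
        · obtain ⟨v, s, rfl, hav⟩ := exists_first a t hkt
          -- w = a :: v ++ a :: s
          have hnotor : ¬ ((∀ j ∈ v, a < j) ∨ (∀ j ∈ v, j < a)) := by
            intro hor
            exact hbad ⟨[], v, s, a, by simp, hor⟩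
          push_neg at hnotor
          obtain ⟨⟨j1, hj1v, hj1⟩, ⟨j2, hj2v, hj2⟩⟩ := hnotor
          have hj2a : a < j2 :=
            lt_of_le_of_ne hj2 (by rintro rfl; exact hav hj2v)
          have hvpos : 1 ≤ v.countP (fun j => decide (a < j)) := by
            rw [Nat.one_le_iff_ne_zero]
            intro h0
            have := List.countP_eq_zero.1 h0 j2 hj2v
            simp [hj2a] at this
          have hlen : (a :: s).length ≤ N := by
            have : v.length ≥ 1 := List.length_pos_iff.2 (by rintro rfl; simp at hj2v)
            simp only [List.length_cons, List.length_append] at hw ⊢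
            omega
          have hbad' : ¬ Bad n (a :: s) := fun h => hbad (by
            have := h.append_left (a :: v)
            simpa using this)
          have hIH := ih (a :: s) hlen hbad'
          have hv0 : v.countP (fun j => decide (j = a)) = 0 :=
            List.countP_eq_zero.2 (fun j hj => by simp; rintro rfl; exact hav hj)
          simp only [List.countP_cons, List.countP_append] at hIH ⊢
          simp only [hv0] at *
          have hlta : decide (a < a) = false := by simp
          simp [hlta] at hIH ⊢
          omega
        · have h0 : t.countP (fun j => decide (j = a)) = 0 :=
            List.countP_eq_zero.2 (fun j hj => by simp; rintro rfl; exact hkt hj)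
          simp [List.countP_cons, h0]
      · have hbad' : ¬ Bad n t := fun h => hbad (h.cons a)
        have hIH := ih t (by simp only [List.length_cons] at hw; omega) hbad'
        simp only [List.countP_cons]
        have : decide (a = k) = false := by simp [hak]
        simp [this]
        omega

end KP

namespace KP
variable {n : ℕ}

lemma countP_split {α : Type*} (p q : α → Bool) (l : List α) :
    l.countP p = l.countP (fun a => p a && q a) + l.countP (fun a => p a && !q a) := by
  induction l with
  | nil => simp
  | cons a t ih =>
    simp only [List.countP_cons, ih]
    cases hp : p a <;> cases hq : q a <;> simp [hp, hq] <;> omega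

lemma bound : ∀ (d m : ℕ) (w : List (Fin n)), ¬ Bad n w → n ≤ m + d →
    w.countP (fun j => decide (m ≤ j.val)) ≤ 2 ^ d - 1 := by
  intro d
  induction d with
  | zero =>
    intro m w _ hnm
    have : w.countP (fun j => decide (m ≤ j.val)) = 0 :=
      List.countP_eq_zero.2 (fun j _ => by simp; omega)
    omega
  | succ d ih =>
    intro m w hbad hnm
    have hsplit := countP_split (fun j : Fin n => decide (m ≤ j.val))
      (fun j : Fin n => decide (m + 1 ≤ j.val)) w
    have h1 : w.countP (fun j : Fin n => decide (m ≤ j.val) && decide (m + 1 ≤ j.val))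
        = w.countP (fun j : Fin n => decide (m + 1 ≤ j.val)) := by
      apply List.countP_congr
      intro j _
      by_cases h : m + 1 ≤ j.val <;> simp [h] <;> omega
    have h2 : w.countP (fun j : Fin n => decide (m ≤ j.val) && !decide (m + 1 ≤ j.val))
        = w.countP (fun j : Fin n => decide (j.val = m)) := by
      apply List.countP_congr
      intro j _
      by_cases h : j.val = m <;> simp [h] <;> omega
    have hup : w.countP (fun j : Fin n => decide (m + 1 ≤ j.val)) ≤ 2 ^ d - 1 :=
      ih (m + 1) w hbad (by omega)
    have heq : w.countP (fun j : Fin n => decide (j.val = m)) ≤ 2 ^ d := by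
      by_cases hmn : m < n
      · set k : Fin n := ⟨m, hmn⟩ with hk
        have hc1 : w.countP (fun j : Fin n => decide (j.val = m))
            = w.countP (fun j : Fin n => decide (j = k)) := by
          apply List.countP_congr
          intro j _
          by_cases h : j = k
          · simp [h, hk]
          · have : j.val ≠ m := fun hv => h (Fin.ext hv)
            simp [h, this]
        have hc2 : w.countP (fun j : Fin n => decide (k < j))
            = w.countP (fun j : Fin n => decide (m + 1 ≤ j.val)) := by
          apply List.countP_congr
          intro j _
          simp only [decide_eq_true_eq, Fin.lt_def]
          show m < (j : ℕ) ↔ m + 1 ≤ (j : ℕ)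
          omega
        have hcl := count_le k w.length w le_rfl hbad
        rw [hc2] at hcl
        rw [hc1]
        have hpow : 1 ≤ 2 ^ d := Nat.one_le_two_pow
        omega
      · have hz : w.countP (fun j : Fin n => decide (j.val = m)) = 0 := by
          apply List.countP_eq_zero.2
          intro j _
          simp only [decide_eq_true_eq]
          have := j.isLt
          omega
        rw [hz]
        exact Nat.zero_le _
    have hpow : 1 ≤ 2 ^ d := Nat.one_le_two_pow
    have : (2:ℕ) ^ (d+1) = 2^d + 2^d := by ring
    omega

lemma length_le_of_notBad (w : List (Fin n)) (hbad : ¬ Bad n w) : w.length ≤ 2 ^ n - 1 := by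
  have hb := bound n 0 w hbad (by omega)
  have hlen : w.countP (fun j : Fin n => decide (0 ≤ j.val)) = w.length := by
    have hfe : (fun j : Fin n => decide (0 ≤ j.val)) = fun _ => true := by
      funext j; simp
    rw [hfe, List.countP_true]
  omega

lemma bad_reduce {w : List (Fin n)} (h : Bad n w) :
    ∃ w', w'.length < w.length ∧ P w' = P w := by
  obtain ⟨u, v, u', i, rfl, hv | hv⟩ := h
  · refine ⟨u ++ (v ++ i :: u'), by simp, ?_⟩
    have habs := absorb_low i v hv
    simp only [P_append, P_cons]
    calc P u * (P v * (kGen n i * P u'))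
        = P u * ((P v * kGen n i) * P u') := by simp [mul_assoc]
      _ = P u * ((kGen n i * P v * kGen n i) * P u') := by rw [habs]
      _ = P u * (kGen n i * (P v * (kGen n i * P u'))) := by simp [mul_assoc]
  · refine ⟨u ++ i :: (v ++ u'), by simp, ?_⟩
    have habs := absorb_high i v hv
    simp only [P_append, P_cons]
    calc P u * (kGen n i * (P v * P u'))
        = P u * ((kGen n i * P v) * P u') := by simp [mul_assoc]
      _ = P u * ((kGen n i * P v * kGen n i) * P u') := by rw [habs]
      _ = P u * (kGen n i * (P v * (kGen n i * P u'))) := by simp [mul_assoc]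

lemma reduce : ∀ (N : ℕ) (w : List (Fin n)), w.length ≤ N → ∃ v, ¬ Bad n v ∧ P v = P w := by
  intro N
  induction N with
  | zero =>
    intro w hw
    rw [List.length_eq_zero_iff.mp (Nat.le_zero.mp hw)]
    refine ⟨[], ?_, rfl⟩
    rintro ⟨u, v, u', i, heq, -⟩
    have := congrArg List.length heq
    simp at this
  | succ N ih =>
    intro w hw
    by_cases h : Bad n w
    · obtain ⟨w', hlen, hP⟩ := bad_reduce h
      obtain ⟨v, hv1, hv2⟩ := ih w' (by omega)
      exact ⟨v, hv1, hv2.trans hP⟩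
    · exact ⟨w, h, rfl⟩

end KP

namespace KP
variable {n : ℕ}

lemma P_eq_mk (l : List (Fin n)) : P l = mkK n (FreeMonoid.ofList l) := by
  induction l with
  | nil =>
    show (1 : Kiselman n) = mkK n 1
    rw [map_one]
  | cons i t ih =>
    rw [P_cons, ih]
    calc kGen n i * mkK n (FreeMonoid.ofList t)
        = mkK n (FreeMonoid.of i * FreeMonoid.ofList t) := (map_mul (mkK n) _ _).symm
      _ = mkK n (FreeMonoid.ofList (i :: t)) := rfl

instance kiselman_finite : Finite (Kiselman n) := by
  have hfin : Finite {l : List (Fin n) // l.length < 2 ^ n} :=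
    (List.finite_length_lt (Fin n) (2 ^ n)).to_subtype
  apply Finite.of_surjective (fun l : {l : List (Fin n) // l.length < 2 ^ n} => P l.val)
  intro x
  obtain ⟨w, rfl⟩ := PresentedMonoid.surjective_mk (rels := kiselmanRel n) x
  obtain ⟨v, hv, hPv⟩ := reduce w.toList.length w.toList le_rfl
  have h1 : (1:ℕ) ≤ 2 ^ n := Nat.one_le_two_pow
  have hlen : v.length < 2 ^ n := by
    have := length_le_of_notBad v hv
    omega
  refine ⟨⟨v, hlen⟩, ?_⟩
  show P v = _
  rw [hPv, P_eq_mk]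
  congr 1

end KP

/-- The idempotents `e_X` of `K_n` are pairwise distinct (and all idempotent), so `K_n`
has at least `2^n` idempotents. -/
theorem eSet_injective (n : ℕ) :
    Function.Injective (eSet n) ∧
    (∀ X : Finset (Fin n), IsIdempotentElem (eSet n X)) ∧
    2 ^ n ≤ Nat.card {x : Kiselman n // IsIdempotentElem x} := by
  refine ⟨KP.eSet_inj, KP.eSet_idem, ?_⟩
  have hinj : Function.Injective
      (fun X : Finset (Fin n) => (⟨eSet n X, KP.eSet_idem X⟩ : {x : Kiselman n // IsIdempotentElem x})) := by
    intro X Y h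
    exact KP.eSet_inj (congrArg Subtype.val h)
  have := Nat.card_le_card_of_injective _ hinj
  calc (2:ℕ) ^ n = Nat.card (Finset (Fin n)) := by
        simp [Nat.card_eq_fintype_card]
    _ ≤ _ := this
end
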